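/- arXiv:1605.02484 — 8 statements merged into one kernel-verified Lean document; each statement's English description precedes it below -/
import Mathlib

section
/- Let a, b be positive real numbers and ν ∈ (0,1). Then for every nonnegative integer n, (1−ν)a + νb ≥ a^{1−ν}b^{ν} + Σ_{k=0}^{n} r_k [ (a^{1−m_k/2^k} b^{m_k/2^k})^{1/2} − (a^{1−(m_k+1)/2^k} b^{(m_k+1)/2^k})^{1/2} ]². -/
/-!
With `c = √(ab)`, for `ν < 1/2` one has `(1 - ν) a + ν b = (1 - 2ν) a + 2ν c + ν (√a - √b)²` and
`a ^ (1 - ν) b ^ ν = a ^ (1 - 2ν) c ^ (2ν)`; for `ν ≥ 1/2` the same holds with `(c, b, 2ν - 1)` in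
place of `(a, c, 2ν)`. This halving step splits off the `k = 0` term, and since it shifts the binary
expansion of `ν` by one digit, the `k`-th term for the new triple is the `(k + 1)`-st term for the
old one. Iterating, and finishing with the weighted AM-GM inequality, gives the bound.
-/

open Real Finset

/-- `r ν k`: the recursively defined coefficients, `r 0 = min {ν, 1-ν}`,
`r k = min {2 r (k-1), 1 - 2 r (k-1)}`. -/
noncomputable def r (ν : ℝ) : ℕ → ℝ
  | 0 => min ν (1 - ν)
  | k + 1 => min (2 * r ν k) (1 - 2 * r ν k)

/-- `m ν k = ⌊2^k ν⌋`, as a real number. -/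
noncomputable def m (ν : ℝ) (k : ℕ) : ℝ := ⌊2 ^ k * ν⌋

noncomputable def weightedGeomMean (a b t : ℝ) : ℝ := a ^ (1 - t) * b ^ t

noncomputable def correction (a b ν : ℝ) (k : ℕ) : ℝ :=
  r ν k * (weightedGeomMean a b (m ν k / 2 ^ k) ^ ((1 : ℝ) / 2) -
    weightedGeomMean a b ((m ν k + 1) / 2 ^ k) ^ ((1 : ℝ) / 2)) ^ 2

section WeightedGeomMean

variable {a b : ℝ}

lemma weightedGeomMean_pos (ha : 0 < a) (hb : 0 < b) (t : ℝ) : 0 < weightedGeomMean a b t := by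
  unfold weightedGeomMean; positivity

lemma weightedGeomMean_zero (a b : ℝ) : weightedGeomMean a b 0 = a := by
  simp [weightedGeomMean]

lemma weightedGeomMean_one (a b : ℝ) : weightedGeomMean a b 1 = b := by
  simp [weightedGeomMean]

lemma weightedGeomMean_half (a b : ℝ) :
    weightedGeomMean a b (1 / 2) = a ^ ((1 : ℝ) / 2) * b ^ ((1 : ℝ) / 2) := by
  norm_num [weightedGeomMean]

lemma weightedGeomMean_left_half (ha : 0 < a) (hb : 0 < b) (t : ℝ) :
    weightedGeomMean a (weightedGeomMean a b (1 / 2)) t = weightedGeomMean a b (t / 2) := by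
  rw [weightedGeomMean_half, weightedGeomMean, weightedGeomMean,
    mul_rpow (by positivity) (by positivity), ← rpow_mul ha.le, ← rpow_mul hb.le, ← mul_assoc,
    ← rpow_add ha]
  ring_nf

lemma weightedGeomMean_half_right (ha : 0 < a) (hb : 0 < b) (t : ℝ) :
    weightedGeomMean (weightedGeomMean a b (1 / 2)) b t = weightedGeomMean a b ((1 + t) / 2) := by
  rw [weightedGeomMean_half, weightedGeomMean, weightedGeomMean,
    mul_rpow (by positivity) (by positivity), ← rpow_mul ha.le, ← rpow_mul hb.le, mul_assoc,
    ← rpow_add hb]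
  ring_nf

end WeightedGeomMean

lemma m_zero {ν : ℝ} (h0 : 0 ≤ ν) (h1 : ν < 1) : m ν 0 = 0 := by
  simp [m, Int.floor_eq_zero_iff.2 ⟨h0, h1⟩]

lemma m_two_mul (ν : ℝ) (k : ℕ) : m (2 * ν) k = m ν (k + 1) := by
  rw [m, m, pow_succ, mul_assoc, mul_comm 2 ν]

lemma m_two_mul_sub_one (ν : ℝ) (k : ℕ) : m (2 * ν - 1) k = m ν (k + 1) - 2 ^ k := by
  have h : (2 : ℝ) ^ k * (2 * ν - 1) = 2 ^ (k + 1) * ν - ((2 ^ k : ℤ) : ℝ) := by push_cast; ring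
  simp only [m, h, Int.floor_sub_intCast]
  push_cast; ring

lemma r_eq_r_succ_of_r_zero {ν ν' : ℝ} (h : r ν' 0 = r ν 1) (k : ℕ) : r ν' k = r ν (k + 1) := by
  induction k with
  | zero => exact h
  | succ k ih => simp only [r, ih]

lemma r_two_mul {ν : ℝ} (hν : ν ≤ 1 / 2) (k : ℕ) : r (2 * ν) k = r ν (k + 1) :=
  r_eq_r_succ_of_r_zero (by simp only [r, min_eq_left (by linarith : ν ≤ 1 - ν)]) k

lemma r_two_mul_sub_one {ν : ℝ} (hν : 1 / 2 ≤ ν) (k : ℕ) : r (2 * ν - 1) k = r ν (k + 1) :=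
  r_eq_r_succ_of_r_zero (by
    simp only [r, min_eq_right (by linarith : 1 - ν ≤ ν)]
    rw [min_comm]; ring_nf) k

section Correction

variable {a b ν : ℝ}

lemma correction_zero (h0 : 0 ≤ ν) (h1 : ν < 1) :
    correction a b ν 0 = min ν (1 - ν) * (a ^ ((1 : ℝ) / 2) - b ^ ((1 : ℝ) / 2)) ^ 2 := by
  simp [correction, m_zero h0 h1, r, weightedGeomMean_zero, weightedGeomMean_one]

lemma correction_two_mul (ha : 0 < a) (hb : 0 < b) (hν : ν ≤ 1 / 2) (k : ℕ) :
    correction a (weightedGeomMean a b (1 / 2)) (2 * ν) k = correction a b ν (k + 1) := by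
  simp only [correction, r_two_mul hν, m_two_mul, weightedGeomMean_left_half ha hb, div_div,
    ← pow_succ]

lemma correction_two_mul_sub_one (ha : 0 < a) (hb : 0 < b) (hν : 1 / 2 ≤ ν) (k : ℕ) :
    correction (weightedGeomMean a b (1 / 2)) b (2 * ν - 1) k = correction a b ν (k + 1) := by
  have h2k : (2 : ℝ) ^ k ≠ 0 := by positivity
  have hshift (x : ℝ) : (1 + (x - 2 ^ k) / 2 ^ k) / 2 = x / 2 ^ (k + 1) := by
    field_simp; ring
  simp only [correction, r_two_mul_sub_one hν, m_two_mul_sub_one, weightedGeomMean_half_right ha hb,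
    hshift, sub_add_eq_add_sub]

end Correction

lemma exists_halving {a b ν : ℝ} (ha : 0 < a) (hb : 0 < b) (h0 : 0 ≤ ν) (h1 : ν < 1) :
    ∃ a' b' ν' : ℝ, 0 < a' ∧ 0 < b' ∧ 0 ≤ ν' ∧ ν' < 1 ∧
      (1 - ν) * a + ν * b = (1 - ν') * a' + ν' * b' + correction a b ν 0 ∧
      weightedGeomMean a b ν = weightedGeomMean a' b' ν' ∧
      ∀ k, correction a' b' ν' k = correction a b ν (k + 1) := by
  have hsa : a ^ ((1 : ℝ) / 2) * a ^ ((1 : ℝ) / 2) = a := by rw [← rpow_add ha]; norm_num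
  have hsb : b ^ ((1 : ℝ) / 2) * b ^ ((1 : ℝ) / 2) = b := by rw [← rpow_add hb]; norm_num
  have hc := weightedGeomMean_pos ha hb (1 / 2)
  rcases lt_or_ge ν (1 / 2) with hν | hν
  · refine ⟨a, _, 2 * ν, ha, hc, by linarith, by linarith, ?_, ?_,
      correction_two_mul ha hb hν.le⟩
    · rw [correction_zero h0 h1, min_eq_left (by linarith), weightedGeomMean_half]
      linear_combination (-ν) * hsa + (-ν) * hsb
    · rw [weightedGeomMean_left_half ha hb, mul_div_cancel_left₀ _ two_ne_zero]
  · refine ⟨_, b, 2 * ν - 1, hc, hb, by linarith, by linarith, ?_, ?_,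
      correction_two_mul_sub_one ha hb hν⟩
    · rw [correction_zero h0 h1, min_eq_right (by linarith), weightedGeomMean_half]
      linear_combination (ν - 1) * hsa + (ν - 1) * hsb
    · rw [weightedGeomMean_half_right ha hb]
      ring_nf

theorem weightedGeomMean_add_sum_correction_le (n : ℕ) {a b ν : ℝ} (ha : 0 < a) (hb : 0 < b)
    (h0 : 0 ≤ ν) (h1 : ν < 1) :
    weightedGeomMean a b ν + ∑ k ∈ range n, correction a b ν k ≤ (1 - ν) * a + ν * b := by
  induction n generalizing a b ν with
  | zero =>
    simpa [weightedGeomMean] using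
      geom_mean_le_arith_mean2_weighted (sub_nonneg.2 h1.le) h0 ha.le hb.le (by ring)
  | succ n ih =>
    obtain ⟨a', b', ν', ha', hb', h0', h1', harith, hgeom, hshift⟩ := exists_halving ha hb h0 h1
    have := ih ha' hb' h0' h1'
    rw [sum_range_succ', hgeom, harith]
    simp only [← hshift]
    linarith

theorem stmt0 (a b ν : ℝ) (ha : 0 < a) (hb : 0 < b) (hν : ν ∈ Set.Ioo (0 : ℝ) 1) (n : ℕ) :
    (1 - ν) * a + ν * b ≥ a ^ (1 - ν) * b ^ ν +
      ∑ k ∈ Finset.range (n + 1), r ν k *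
        ((a ^ (1 - m ν k / 2 ^ k) * b ^ (m ν k / 2 ^ k)) ^ ((1 : ℝ) / 2) -
          (a ^ (1 - (m ν k + 1) / 2 ^ k) * b ^ ((m ν k + 1) / 2 ^ k)) ^ ((1 : ℝ) / 2)) ^ 2 :=
  weightedGeomMean_add_sum_correction_le (n + 1) ha hb hν.1.le hν.2
end

section
/- Let a, b be positive real numbers and ν ∈ (0,1). Then (1−ν)a + νb ≥ a^{1−ν}b^{ν} + Σ_{k=0}^{∞} r_k [ (a^{1−m_k/2^k} b^{m_k/2^k})^{1/2} − (a^{1−(m_k+1)/2^k} b^{(m_k+1)/2^k})^{1/2} ]², where the infinite series (which has nonnegative terms and bounded partial sums, hence converges) is interpreted as its sum. -/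
lemma fract_double_lt {x : ℝ} (h : Int.fract x < 1/2) :
    Int.fract (2 * x) = 2 * Int.fract x := by
  have h0 := Int.fract_nonneg x
  have hx : 2 * x = 2 * Int.fract x + ((2 * ⌊x⌋ : ℤ) : ℝ) := by
    rw [Int.fract]; push_cast; ring
  rw [hx, Int.fract_add_intCast, Int.fract_eq_self.mpr ⟨by linarith, by linarith⟩]

lemma fract_double_ge {x : ℝ} (h : 1/2 ≤ Int.fract x) :
    Int.fract (2 * x) = 2 * Int.fract x - 1 := by
  have h1 := Int.fract_lt_one x
  have hx : 2 * x = (2 * Int.fract x - 1) + ((2 * ⌊x⌋ + 1 : ℤ) : ℝ) := by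
    rw [Int.fract]; push_cast; ring
  rw [hx, Int.fract_add_intCast, Int.fract_eq_self.mpr ⟨by linarith, by linarith⟩]

lemma m_eq (ν : ℝ) (k : ℕ) : m ν k = 2 ^ k * ν - Int.fract (2 ^ k * ν) := by
  rw [m, Int.fract]; ring

lemma r_eq (ν : ℝ) (hν : ν ∈ Set.Ico (0:ℝ) 1) :
    ∀ k, r ν k = min (Int.fract (2 ^ k * ν)) (1 - Int.fract (2 ^ k * ν))
  | 0 => by
    have : Int.fract ((2:ℝ) ^ 0 * ν) = ν := by
      rw [pow_zero, one_mul, Int.fract_eq_self.mpr ⟨hν.1, hν.2⟩]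
    rw [r, this]
  | (k+1) => by
    have ih := r_eq ν hν k
    have h0 : 0 ≤ Int.fract ((2:ℝ) ^ k * ν) := Int.fract_nonneg _
    have h1 : Int.fract ((2:ℝ) ^ k * ν) < 1 := Int.fract_lt_one _
    have hpow : (2:ℝ) ^ (k+1) * ν = 2 * (2 ^ k * ν) := by ring
    rcases lt_or_ge (Int.fract ((2:ℝ) ^ k * ν)) (1/2) with h | h
    · have ih' : r ν k = Int.fract ((2:ℝ) ^ k * ν) := by
        rw [ih, min_eq_left (by linarith)]
      rw [r, ih', hpow, fract_double_lt h]
    · have ih' : r ν k = 1 - Int.fract ((2:ℝ) ^ k * ν) := by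
        rw [ih, min_eq_right (by linarith)]
      rw [r, ih', hpow, fract_double_ge h, min_comm]
      congr 1 <;> ring

noncomputable def F (a b t : ℝ) : ℝ := a ^ (1 - t) * b ^ t

noncomputable def G (a b ν : ℝ) (k : ℕ) : ℝ :=
  r ν k * ((F a b (m ν k / 2 ^ k)) ^ ((1:ℝ)/2) -
    (F a b ((m ν k + 1) / 2 ^ k)) ^ ((1:ℝ)/2)) ^ 2

noncomputable def CC (a b ν : ℝ) (k : ℕ) : ℝ :=
  (1 - Int.fract (2 ^ k * ν)) * F a b (m ν k / 2 ^ k) +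
    Int.fract (2 ^ k * ν) * F a b ((m ν k + 1) / 2 ^ k)

lemma F_pos {a b : ℝ} (ha : 0 < a) (hb : 0 < b) (t : ℝ) : 0 < F a b t := by
  unfold F; positivity

lemma F_mid {a b : ℝ} (ha : 0 < a) (hb : 0 < b) (u v : ℝ) :
    F a b ((u + v) / 2) = (F a b u) ^ ((1:ℝ)/2) * (F a b v) ^ ((1:ℝ)/2) := by
  unfold F
  rw [← Real.mul_rpow (by positivity) (by positivity),
      show a ^ (1-u) * b ^ u * (a ^ (1-v) * b ^ v) = a ^ ((1-u)+(1-v)) * b ^ (u+v) by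
        rw [Real.rpow_add ha, Real.rpow_add hb]; ring,
      Real.mul_rpow (by positivity) (by positivity),
      ← Real.rpow_mul ha.le, ← Real.rpow_mul hb.le,
      show ((1-u)+(1-v)) * (1/2) = 1 - (u+v)/2 by ring,
      show (u+v) * (1/2) = (u+v)/2 by ring]

lemma sq_rpow_half {x : ℝ} (hx : 0 < x) : ((x) ^ ((1:ℝ)/2)) ^ 2 = x := by
  rw [← Real.rpow_natCast (x ^ ((1:ℝ)/2)) 2, ← Real.rpow_mul hx.le]
  norm_num

lemma CC_step {a b : ℝ} (ha : 0 < a) (hb : 0 < b) (ν : ℝ)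
    (hν : ν ∈ Set.Ico (0:ℝ) 1) (k : ℕ) :
    CC a b ν k = CC a b ν (k+1) + G a b ν k := by
  have hne : ((2:ℝ) ^ k) ≠ 0 := by positivity
  have h0 : 0 ≤ Int.fract ((2:ℝ) ^ k * ν) := Int.fract_nonneg _
  have h1 : Int.fract ((2:ℝ) ^ k * ν) < 1 := Int.fract_lt_one _
  have hpow : (2:ℝ) ^ (k+1) * ν = 2 * (2 ^ k * ν) := by ring
  have hr := r_eq ν hν k
  have hp := sq_rpow_half (F_pos ha hb (m ν k / 2 ^ k))
  have hq := sq_rpow_half (F_pos ha hb ((m ν k + 1) / 2 ^ k))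
  rcases lt_or_ge (Int.fract ((2:ℝ) ^ k * ν)) (1/2) with h | h
  · have hf2 : Int.fract ((2:ℝ) ^ (k+1) * ν) = 2 * Int.fract ((2:ℝ) ^ k * ν) := by
      rw [hpow]; exact fract_double_lt h
    have hm2 : m ν (k+1) = 2 * m ν k := by
      rw [m_eq, m_eq, hf2]; ring
    have ha1 : m ν (k+1) / 2 ^ (k+1) = m ν k / 2 ^ k := by
      rw [hm2, pow_succ]; field_simp
    have ha2 : (m ν (k+1) + 1) / 2 ^ (k+1)
        = (m ν k / 2 ^ k + (m ν k + 1) / 2 ^ k) / 2 := by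
      rw [hm2, pow_succ]; field_simp; ring
    have hrk : r ν k = Int.fract ((2:ℝ) ^ k * ν) := by
      rw [hr, min_eq_left (by linarith)]
    unfold CC G
    rw [hf2, ha1, ha2, F_mid ha hb, hrk]
    linear_combination (-(Int.fract ((2:ℝ) ^ k * ν))) * hp
      + (-(Int.fract ((2:ℝ) ^ k * ν))) * hq
  · have hf2 : Int.fract ((2:ℝ) ^ (k+1) * ν) = 2 * Int.fract ((2:ℝ) ^ k * ν) - 1 := by
      rw [hpow]; exact fract_double_ge h
    have hm2 : m ν (k+1) = 2 * m ν k + 1 := by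
      rw [m_eq, m_eq, hf2]; ring
    have ha1 : m ν (k+1) / 2 ^ (k+1)
        = (m ν k / 2 ^ k + (m ν k + 1) / 2 ^ k) / 2 := by
      rw [hm2, pow_succ]; field_simp; ring
    have ha2 : (m ν (k+1) + 1) / 2 ^ (k+1) = (m ν k + 1) / 2 ^ k := by
      rw [hm2, pow_succ]; field_simp; ring
    have hrk : r ν k = 1 - Int.fract ((2:ℝ) ^ k * ν) := by
      rw [hr, min_eq_right (by linarith)]
    unfold CC G
    rw [hf2, ha1, ha2, F_mid ha hb, hrk]
    linear_combination (Int.fract ((2:ℝ) ^ k * ν) - 1) * hp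
      + (Int.fract ((2:ℝ) ^ k * ν) - 1) * hq

lemma CC_tele {a b : ℝ} (ha : 0 < a) (hb : 0 < b) (ν : ℝ)
    (hν : ν ∈ Set.Ico (0:ℝ) 1) :
    ∀ n, CC a b ν 0 = CC a b ν n + ∑ k ∈ Finset.range n, G a b ν k := by
  intro n
  induction n with
  | zero => simp
  | succ n ih =>
    rw [ih, Finset.sum_range_succ, CC_step ha hb ν hν n]; ring

lemma CC_zero {a b : ℝ} (ha : 0 < a) (hb : 0 < b) (ν : ℝ)
    (hν : ν ∈ Set.Ico (0:ℝ) 1) :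
    CC a b ν 0 = (1 - ν) * a + ν * b := by
  have h0 : ⌊(2:ℝ) ^ 0 * ν⌋ = 0 := by
    rw [pow_zero, one_mul]
    exact Int.floor_eq_zero_iff.mpr ⟨hν.1, hν.2⟩
  have hf : Int.fract ((2:ℝ) ^ 0 * ν) = ν := by
    rw [pow_zero, one_mul, Int.fract_eq_self.mpr ⟨hν.1, hν.2⟩]
  unfold CC F m
  rw [h0, hf]
  norm_num

theorem stmt1 (a b ν : ℝ) (ha : 0 < a) (hb : 0 < b) (hν : ν ∈ Set.Ioo (0 : ℝ) 1) :
    (1 - ν) * a + ν * b ≥ a ^ (1 - ν) * b ^ ν +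
      ∑' k : ℕ, r ν k *
        ((a ^ (1 - m ν k / 2 ^ k) * b ^ (m ν k / 2 ^ k)) ^ ((1 : ℝ) / 2) -
          (a ^ (1 - (m ν k + 1) / 2 ^ k) * b ^ ((m ν k + 1) / 2 ^ k)) ^ ((1 : ℝ) / 2)) ^ 2 := by
  have hν' : ν ∈ Set.Ico (0:ℝ) 1 := ⟨hν.1.le, hν.2⟩
  -- continuity of F a b
  have hFc : Continuous (F a b) := by
    have : F a b = fun t => Real.exp (Real.log a * (1 - t)) * Real.exp (Real.log b * t) := by
      funext t
      rw [F, Real.rpow_def_of_pos ha, Real.rpow_def_of_pos hb]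
    rw [this]
    continuity
  -- u n → ν and v n → ν
  have hhalf : Filter.Tendsto (fun n : ℕ => ((1:ℝ)/2) ^ n) Filter.atTop (nhds 0) :=
    tendsto_pow_atTop_nhds_zero_of_lt_one (by norm_num) (by norm_num)
  have hu0 : Filter.Tendsto (fun n : ℕ => m ν n / 2 ^ n - ν) Filter.atTop (nhds 0) := by
    apply squeeze_zero_norm _ hhalf
    intro n
    have hpos : (0:ℝ) < 2 ^ n := by positivity
    have he : m ν n / 2 ^ n - ν = -(Int.fract (2 ^ n * ν) / 2 ^ n) := by
      rw [m_eq]; field_simp; rw [Int.fract]; ring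
    rw [Real.norm_eq_abs, he, abs_neg,
      abs_of_nonneg (div_nonneg (Int.fract_nonneg _) hpos.le)]
    calc Int.fract (2 ^ n * ν) / 2 ^ n ≤ 1 / 2 ^ n := by
          gcongr
          exact (Int.fract_lt_one _).le
      _ = ((1:ℝ)/2) ^ n := by rw [div_pow, one_pow]
  have hv0 : Filter.Tendsto (fun n : ℕ => (m ν n + 1) / 2 ^ n - ν) Filter.atTop (nhds 0) := by
    apply squeeze_zero_norm _ hhalf
    intro n
    have hpos : (0:ℝ) < 2 ^ n := by positivity
    have hlt := Int.fract_lt_one ((2:ℝ) ^ n * ν)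
    have hge := Int.fract_nonneg ((2:ℝ) ^ n * ν)
    have he : (m ν n + 1) / 2 ^ n - ν = (1 - Int.fract (2 ^ n * ν)) / 2 ^ n := by
      rw [m_eq]; field_simp; rw [Int.fract]; ring
    rw [Real.norm_eq_abs, he, abs_of_nonneg (div_nonneg (by linarith) hpos.le)]
    calc (1 - Int.fract (2 ^ n * ν)) / 2 ^ n ≤ 1 / 2 ^ n := by
          gcongr
          linarith
      _ = ((1:ℝ)/2) ^ n := by rw [div_pow, one_pow]
  have hu : Filter.Tendsto (fun n : ℕ => m ν n / 2 ^ n) Filter.atTop (nhds ν) := by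
    have := hu0.add_const ν
    simpa using this
  have hv : Filter.Tendsto (fun n : ℕ => (m ν n + 1) / 2 ^ n) Filter.atTop (nhds ν) := by
    have := hv0.add_const ν
    simpa using this
  -- F at the dyadic points tends to F ν
  have t1 : Filter.Tendsto (fun n : ℕ => ‖F a b (m ν n / 2 ^ n) - F a b ν‖)
      Filter.atTop (nhds 0) := by
    have h := (hFc.tendsto ν).comp hu
    rw [tendsto_iff_norm_sub_tendsto_zero] at h
    exact h
  have t2 : Filter.Tendsto (fun n : ℕ => ‖F a b ((m ν n + 1) / 2 ^ n) - F a b ν‖)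
      Filter.atTop (nhds 0) := by
    have h := (hFc.tendsto ν).comp hv
    rw [tendsto_iff_norm_sub_tendsto_zero] at h
    exact h
  -- CC tends to F ν
  have hCC0 : Filter.Tendsto (fun n : ℕ => CC a b ν n - F a b ν) Filter.atTop (nhds 0) := by
    apply squeeze_zero_norm _ (by simpa using t1.add t2)
    intro n
    have h0 : 0 ≤ Int.fract ((2:ℝ) ^ n * ν) := Int.fract_nonneg _
    have h1 : Int.fract ((2:ℝ) ^ n * ν) < 1 := Int.fract_lt_one _
    have e : CC a b ν n - F a b ν =
        (1 - Int.fract (2 ^ n * ν)) * (F a b (m ν n / 2 ^ n) - F a b ν) +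
          Int.fract (2 ^ n * ν) * (F a b ((m ν n + 1) / 2 ^ n) - F a b ν) := by
      unfold CC; ring
    rw [Real.norm_eq_abs, e]
    refine (abs_add_le _ _).trans ?_
    rw [abs_mul, abs_mul, abs_of_nonneg (by linarith), abs_of_nonneg h0]
    have n1 := abs_nonneg (F a b (m ν n / 2 ^ n) - F a b ν)
    have n2 := abs_nonneg (F a b ((m ν n + 1) / 2 ^ n) - F a b ν)
    nlinarith
  have hCC : Filter.Tendsto (CC a b ν) Filter.atTop (nhds (F a b ν)) := by
    have := hCC0.add_const (F a b ν)
    simpa using this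
  -- partial sums
  have hGnn : ∀ k, 0 ≤ G a b ν k := by
    intro k
    have hrk : 0 ≤ r ν k := by
      rw [r_eq ν hν' k]
      exact le_min (Int.fract_nonneg _) (by linarith [Int.fract_lt_one ((2:ℝ) ^ k * ν)])
    exact mul_nonneg hrk (sq_nonneg _)
  have hSlim : Filter.Tendsto (fun n => ∑ k ∈ Finset.range n, G a b ν k)
      Filter.atTop (nhds (CC a b ν 0 - F a b ν)) := by
    have : (fun n => ∑ k ∈ Finset.range n, G a b ν k) =
        fun n => CC a b ν 0 - CC a b ν n := by
      funext n
      have := CC_tele ha hb ν hν' n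
      linarith
    rw [this]
    exact tendsto_const_nhds.sub hCC
  have hSmono : Monotone (fun n => ∑ k ∈ Finset.range n, G a b ν k) := by
    apply monotone_nat_of_le_succ
    intro n
    rw [Finset.sum_range_succ]
    linarith [hGnn n]
  have hSle : ∀ n, ∑ k ∈ Finset.range n, G a b ν k ≤ CC a b ν 0 - F a b ν :=
    fun n => hSmono.ge_of_tendsto hSlim n
  have hsummable : Summable (G a b ν) := summable_of_sum_range_le hGnn hSle
  have htsum : ∑' k, G a b ν k = CC a b ν 0 - F a b ν :=
    tendsto_nhds_unique hsummable.hasSum.tendsto_sum_nat hSlim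
  have key : a ^ (1 - ν) * b ^ ν + ∑' k, G a b ν k = (1 - ν) * a + ν * b := by
    rw [htsum, CC_zero ha hb ν hν']
    unfold F
    ring
  exact ge_of_eq key.symm
end

section
/- Let a, b be positive real numbers and suppose ν = t/2^n for some positive integers t, n with 0 < t/2^n < 1. Then equality holds: (1−ν)a + νb = a^{1−ν}b^{ν} + Σ_{k=0}^{n−1} r_k [ (a^{1−m_k/2^k} b^{m_k/2^k})^{1/2} − (a^{1−(m_k+1)/2^k} b^{(m_k+1)/2^k})^{1/2} ]². -/
lemma floor_two_lo (u : ℝ) (h : Int.fract u < 1/2) :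
    (⌊2*u⌋ : ℤ) = 2*⌊u⌋ ∧ Int.fract (2*u) = 2 * Int.fract u := by
  have h0 := Int.fract_nonneg u
  have hu := Int.floor_add_fract u
  have hf : (⌊2*u⌋ : ℤ) = 2*⌊u⌋ := by
    rw [Int.floor_eq_iff]; push_cast; constructor <;> linarith
  refine ⟨hf, ?_⟩
  have : Int.fract (2*u) = 2*u - ⌊2*u⌋ := Int.self_sub_floor (2*u) ▸ rfl
  have h2 : Int.fract u = u - ⌊u⌋ := Int.self_sub_floor u ▸ rfl
  rw [this, hf]; push_cast; linarith

lemma floor_two_hi (u : ℝ) (h : 1/2 ≤ Int.fract u) :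
    (⌊2*u⌋ : ℤ) = 2*⌊u⌋+1 ∧ Int.fract (2*u) = 2 * Int.fract u - 1 := by
  have h1 := Int.fract_lt_one u
  have hu := Int.floor_add_fract u
  have hf : (⌊2*u⌋ : ℤ) = 2*⌊u⌋+1 := by
    rw [Int.floor_eq_iff]; push_cast; constructor <;> linarith
  refine ⟨hf, ?_⟩
  have : Int.fract (2*u) = 2*u - ⌊2*u⌋ := Int.self_sub_floor (2*u) ▸ rfl
  have h2 : Int.fract u = u - ⌊u⌋ := Int.self_sub_floor u ▸ rfl
  rw [this, hf]; push_cast; linarith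

lemma r_min (ν : ℝ) (h0 : 0 ≤ ν) (h1 : ν < 1) (k : ℕ) :
    r ν k = min (Int.fract (2^k * ν)) (1 - Int.fract (2^k * ν)) := by
  induction k with
  | zero =>
    simp only [pow_zero, one_mul, r]
    rw [Int.fract_eq_self.mpr ⟨h0, h1⟩]
  | succ k ih =>
    have hrw : (2:ℝ)^(k+1) * ν = 2 * (2^k * ν) := by ring
    have hf0 := Int.fract_nonneg (2^k * ν : ℝ)
    have hf1 := Int.fract_lt_one (2^k * ν : ℝ)
    rcases lt_or_ge (Int.fract (2^k * ν : ℝ)) (1/2) with h | h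
    · have hmin : r ν k = Int.fract (2^k * ν : ℝ) := by
        rw [ih, min_eq_left (by linarith)]
      rw [show r ν (k+1) = min (2 * r ν k) (1 - 2 * r ν k) from rfl, hmin, hrw,
        (floor_two_lo _ h).2]
    · have hmin : r ν k = 1 - Int.fract (2^k * ν : ℝ) := by
        rw [ih, min_eq_right (by linarith)]
      rw [show r ν (k+1) = min (2 * r ν k) (1 - 2 * r ν k) from rfl, hmin, hrw,
        (floor_two_hi _ h).2, min_comm]
      congr 1 <;> ring

lemma geo (a b : ℝ) (ha : 0 < a) (hb : 0 < b) (p q : ℝ) :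
    (a ^ (1-p) * b ^ p * (a ^ (1-q) * b ^ q)) ^ ((1:ℝ)/2)
      = a ^ (1 - (p+q)/2) * b ^ ((p+q)/2) := by
  rw [show a ^ (1-p) * b ^ p * (a ^ (1-q) * b ^ q) = a ^ ((1-p)+(1-q)) * b ^ (p+q) by
    rw [Real.rpow_add ha, Real.rpow_add hb]; ring]
  rw [Real.mul_rpow (by positivity) (by positivity), ← Real.rpow_mul ha.le,
    ← Real.rpow_mul hb.le]
  congr 1
  · congr 1; ring
  · congr 1; ring

/-- The telescoping sequence. -/
noncomputable def Fa (a b ν : ℝ) (k : ℕ) : ℝ :=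
  (1 - Int.fract (2^k * ν)) * (a ^ (1 - m ν k / 2 ^ k) * b ^ (m ν k / 2 ^ k))
    + Int.fract (2^k * ν) * (a ^ (1 - (m ν k + 1) / 2 ^ k) * b ^ ((m ν k + 1) / 2 ^ k))

lemma Fa_step (a b ν : ℝ) (ha : 0 < a) (hb : 0 < b) (hν0 : 0 ≤ ν) (hν1 : ν < 1) (k : ℕ) :
    Fa a b ν k - Fa a b ν (k+1) = r ν k *
      ((a ^ (1 - m ν k / 2 ^ k) * b ^ (m ν k / 2 ^ k)) ^ ((1 : ℝ) / 2) -
        (a ^ (1 - (m ν k + 1) / 2 ^ k) * b ^ ((m ν k + 1) / 2 ^ k)) ^ ((1 : ℝ) / 2)) ^ 2 := by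
  set p : ℝ := m ν k / 2 ^ k with hp
  set q : ℝ := (m ν k + 1) / 2 ^ k with hq
  set x : ℝ := a ^ (1 - p) * b ^ p with hxdef
  set y : ℝ := a ^ (1 - q) * b ^ q with hydef
  set g : ℝ := a ^ (1 - (p+q)/2) * b ^ ((p+q)/2) with hgdef
  have hx : 0 < x := by positivity
  have hy : 0 < y := by positivity
  have hrw : (2:ℝ)^(k+1) * ν = 2 * (2^k * ν) := by ring
  set θ : ℝ := Int.fract (2^k * ν) with hθ
  have hθ0 : 0 ≤ θ := Int.fract_nonneg _
  have hθ1 : θ < 1 := Int.fract_lt_one _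
  -- the squared term
  have h1 : x ^ ((1:ℝ)/2) * y ^ ((1:ℝ)/2) = g := by
    rw [← Real.mul_rpow hx.le hy.le, hxdef, hydef, geo a b ha hb p q, hgdef]
  have h2 : x ^ ((1:ℝ)/2) * x ^ ((1:ℝ)/2) = x := by
    rw [← Real.rpow_add hx]; norm_num
  have h3 : y ^ ((1:ℝ)/2) * y ^ ((1:ℝ)/2) = y := by
    rw [← Real.rpow_add hy]; norm_num
  have hsq : (x ^ ((1:ℝ)/2) - y ^ ((1:ℝ)/2))^2 = x + y - 2*g := by
    linear_combination h2 + h3 - 2*h1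
  have hr := r_min ν hν0 hν1 k
  rw [← hθ] at hr
  rcases lt_or_ge θ (1/2) with h | h
  · obtain ⟨hfl, hfr⟩ := floor_two_lo (2^k * ν : ℝ) (by rw [← hθ]; exact h)
    have hm : m ν (k+1) = 2 * m ν k := by
      unfold m; rw [hrw, hfl]; push_cast; ring
    have e1 : m ν (k+1) / 2^(k+1) = p := by
      rw [hm, hp]; field_simp; ring
    have e2 : (m ν (k+1) + 1) / 2^(k+1) = (p+q)/2 := by
      rw [hm, hp, hq]; field_simp; ring
    unfold Fa
    rw [hrw, hfr, ← hθ, e1, e2, ← hp, ← hxdef, ← hgdef, hsq, hr,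
      min_eq_left (by linarith)]
    ring
  · obtain ⟨hfl, hfr⟩ := floor_two_hi (2^k * ν : ℝ) (by rw [← hθ]; exact h)
    have hm : m ν (k+1) = 2 * m ν k + 1 := by
      unfold m; rw [hrw, hfl]; push_cast; ring
    have e1 : m ν (k+1) / 2^(k+1) = (p+q)/2 := by
      rw [hm, hp, hq]; field_simp; ring
    have e2 : (m ν (k+1) + 1) / 2^(k+1) = q := by
      rw [hm, hq]; field_simp; ring
    unfold Fa
    rw [hrw, hfr, ← hθ, e1, e2, ← hq, ← hydef, ← hgdef, hsq, hr,
      min_eq_right (by linarith)]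
    ring

theorem stmt2 (a b ν : ℝ) (ha : 0 < a) (hb : 0 < b) (t n : ℕ) (ht : 0 < t) (hn : 0 < n)
    (hν : ν = t / 2 ^ n) (hν0 : 0 < ν) (hν1 : ν < 1) :
    (1 - ν) * a + ν * b = a ^ (1 - ν) * b ^ ν +
      ∑ k ∈ Finset.range n, r ν k *
        ((a ^ (1 - m ν k / 2 ^ k) * b ^ (m ν k / 2 ^ k)) ^ ((1 : ℝ) / 2) -
          (a ^ (1 - (m ν k + 1) / 2 ^ k) * b ^ ((m ν k + 1) / 2 ^ k)) ^ ((1 : ℝ) / 2)) ^ 2 := by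
  have hsum : ∑ k ∈ Finset.range n, r ν k *
        ((a ^ (1 - m ν k / 2 ^ k) * b ^ (m ν k / 2 ^ k)) ^ ((1 : ℝ) / 2) -
          (a ^ (1 - (m ν k + 1) / 2 ^ k) * b ^ ((m ν k + 1) / 2 ^ k)) ^ ((1 : ℝ) / 2)) ^ 2
      = Fa a b ν 0 - Fa a b ν n := by
    rw [← Finset.sum_range_sub' (Fa a b ν) n]
    exact Finset.sum_congr rfl fun k _ => (Fa_step a b ν ha hb hν0.le hν1 k).symm
  have hF0 : Fa a b ν 0 = (1 - ν) * a + ν * b := by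
    have hm0 : m ν 0 = 0 := by
      unfold m; rw [pow_zero, one_mul, Int.floor_eq_zero_iff.mpr ⟨hν0.le, hν1⟩]; simp
    unfold Fa
    rw [hm0, pow_zero, one_mul, Int.fract_eq_self.mpr ⟨hν0.le, hν1⟩]
    norm_num
  have h2n : (2:ℝ)^n * ν = t := by
    rw [hν]; field_simp
  have hFn : Fa a b ν n = a ^ (1 - ν) * b ^ ν := by
    have hmn : m ν n = t := by
      unfold m; rw [h2n]; push_cast; simp
    have hfr : Int.fract ((2:ℝ)^n * ν) = 0 := by
      rw [h2n]; exact_mod_cast Int.fract_natCast t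
    have hexp : m ν n / 2^n = ν := by
      rw [hmn, hν]
    unfold Fa
    rw [hfr, hexp]
    ring
  rw [hsum, hF0, hFn]
  ring
end

section
/- Let a, b be positive real numbers and ν ∈ (0,1). Then (1−ν)a + νb ≤ a^{1−ν}b^{ν} + (√a − √b)² − Σ_{k=0}^{∞} r_k [ (a^{m_k/2^k} b^{1−m_k/2^k})^{1/2} − (a^{(m_k+1)/2^k} b^{1−(m_k+1)/2^k})^{1/2} ]², where the infinite series is interpreted as its sum (the terms are nonnegative). -/
namespace Stmt4Aux

/-- abbreviation for interpolation points -/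
noncomputable def P (a b x : ℝ) : ℝ := a ^ x * b ^ (1 - x)

lemma P_pos {a b : ℝ} (ha : 0 < a) (hb : 0 < b) (x : ℝ) : 0 < P a b x := by
  unfold P; positivity

lemma P_combine {a b : ℝ} (ha : 0 < a) (hb : 0 < b) (p q s t : ℝ) (hst : s + t = 1) :
    P a b p ^ s * P a b q ^ t = P a b (p * s + q * t) := by
  unfold P
  rw [Real.mul_rpow (Real.rpow_pos_of_pos ha p).le (Real.rpow_pos_of_pos hb _).le,
      Real.mul_rpow (Real.rpow_pos_of_pos ha q).le (Real.rpow_pos_of_pos hb _).le,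
      ← Real.rpow_mul ha.le, ← Real.rpow_mul hb.le, ← Real.rpow_mul ha.le,
      ← Real.rpow_mul hb.le, mul_mul_mul_comm, ← Real.rpow_add ha, ← Real.rpow_add hb]
  have h : (1 - p) * s + (1 - q) * t = 1 - (p * s + q * t) := by linear_combination hst
  rw [h]

lemma half_sq {x : ℝ} (hx : 0 < x) : (x ^ ((1:ℝ)/2)) ^ 2 = x := by
  rw [← Real.rpow_natCast (x ^ ((1:ℝ)/2)) 2, ← Real.rpow_mul hx.le]
  norm_num

lemma m_zero {ν : ℝ} (h0 : 0 < ν) (h1 : ν < 1) : m ν 0 = 0 := by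
  have : ⌊(2:ℝ) ^ (0:ℕ) * ν⌋ = 0 := by
    rw [pow_zero, one_mul, Int.floor_eq_zero_iff]
    exact Set.mem_Ico.mpr ⟨h0.le, h1⟩
  unfold m
  rw [this, Int.cast_zero]

lemma fract_zero {ν : ℝ} (h0 : 0 < ν) (h1 : ν < 1) : Int.fract ((2:ℝ) ^ (0:ℕ) * ν) = ν := by
  rw [pow_zero, one_mul, Int.fract_eq_self.mpr ⟨h0.le, h1⟩]

lemma succ_lt {ν : ℝ} {k : ℕ} (h : Int.fract ((2:ℝ)^k * ν) < 1/2) :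
    m ν (k+1) = 2 * m ν k ∧
      Int.fract ((2:ℝ)^(k+1) * ν) = 2 * Int.fract ((2:ℝ)^k * ν) := by
  set x := (2:ℝ)^k * ν with hxdef
  have hx : (2:ℝ)^(k+1) * ν = ((2 * ⌊x⌋ : ℤ) : ℝ) + 2 * Int.fract x := by
    have h2 := Int.floor_add_fract x
    push_cast
    rw [pow_succ]
    nlinarith [h2]
  have h0 : 0 ≤ Int.fract x := Int.fract_nonneg x
  have hfl : ⌊(2:ℝ) * Int.fract x⌋ = 0 := by
    rw [Int.floor_eq_zero_iff]
    constructor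
    · linarith
    · show (2:ℝ) * Int.fract x < 1; linarith
  have hm : ⌊(2:ℝ)^(k+1) * ν⌋ = 2 * ⌊x⌋ := by
    rw [hx, Int.floor_intCast_add, hfl, add_zero]
  constructor
  · show ((⌊(2:ℝ)^(k+1) * ν⌋ : ℤ) : ℝ) = 2 * ((⌊x⌋ : ℤ) : ℝ)
    rw [hm]; push_cast; ring
  · rw [Int.fract, hm, hx]; push_cast; ring

lemma succ_ge {ν : ℝ} {k : ℕ} (h : 1/2 ≤ Int.fract ((2:ℝ)^k * ν)) :
    m ν (k+1) = 2 * m ν k + 1 ∧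
      Int.fract ((2:ℝ)^(k+1) * ν) = 2 * Int.fract ((2:ℝ)^k * ν) - 1 := by
  set x := (2:ℝ)^k * ν with hxdef
  have hx : (2:ℝ)^(k+1) * ν = ((2 * ⌊x⌋ : ℤ) : ℝ) + 2 * Int.fract x := by
    have h2 := Int.floor_add_fract x
    push_cast
    rw [pow_succ]
    nlinarith [h2]
  have h1 : Int.fract x < 1 := Int.fract_lt_one x
  have hfl : ⌊(2:ℝ) * Int.fract x⌋ = 1 :=
    Int.floor_eq_iff.mpr ⟨by push_cast; linarith, by push_cast; linarith⟩
  have hm : ⌊(2:ℝ)^(k+1) * ν⌋ = 2 * ⌊x⌋ + 1 := by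
    rw [hx, Int.floor_intCast_add, hfl]
  constructor
  · show ((⌊(2:ℝ)^(k+1) * ν⌋ : ℤ) : ℝ) = 2 * ((⌊x⌋ : ℤ) : ℝ) + 1
    rw [hm]; push_cast; ring
  · rw [Int.fract, hm, hx]; push_cast; ring

lemma r_eq {ν : ℝ} (h0 : 0 < ν) (h1 : ν < 1) (k : ℕ) :
    r ν k = min (Int.fract ((2:ℝ)^k * ν)) (1 - Int.fract ((2:ℝ)^k * ν)) := by
  induction k with
  | zero => rw [r, fract_zero h0 h1]
  | succ k ih =>
    have hf0 : 0 ≤ Int.fract ((2:ℝ)^k * ν) := Int.fract_nonneg _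
    have hf1 : Int.fract ((2:ℝ)^k * ν) < 1 := Int.fract_lt_one _
    rcases lt_or_ge (Int.fract ((2:ℝ)^k * ν)) (1/2) with hc | hc
    · obtain ⟨-, hf⟩ := succ_lt hc
      have hm : min (Int.fract ((2:ℝ)^k * ν)) (1 - Int.fract ((2:ℝ)^k * ν))
          = Int.fract ((2:ℝ)^k * ν) := min_eq_left (by linarith)
      rw [r, ih, hm, hf]
    · obtain ⟨-, hf⟩ := succ_ge hc
      have hm : min (Int.fract ((2:ℝ)^k * ν)) (1 - Int.fract ((2:ℝ)^k * ν))
          = 1 - Int.fract ((2:ℝ)^k * ν) := min_eq_right (by linarith)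
      rw [r, ih, hm, hf, min_comm]
      congr 1 <;> ring

lemma m_eq (ν : ℝ) (k : ℕ) : m ν k = (2:ℝ)^k * ν - Int.fract ((2:ℝ)^k * ν) := by
  rw [Int.self_sub_fract]; rfl

/-- partial weighted mean -/
noncomputable def W (a b ν : ℝ) (k : ℕ) : ℝ :=
  (1 - Int.fract ((2:ℝ)^k * ν)) * P a b (m ν k / 2^k)
    + Int.fract ((2:ℝ)^k * ν) * P a b ((m ν k + 1) / 2^k)

lemma step {a b ν : ℝ} (ha : 0 < a) (hb : 0 < b) (h0 : 0 < ν) (h1 : ν < 1) (k : ℕ) :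
    W a b ν k =
      r ν k * ((P a b (m ν k / 2^k)) ^ ((1:ℝ)/2)
        - (P a b ((m ν k + 1) / 2^k)) ^ ((1:ℝ)/2)) ^ 2 + W a b ν (k+1) := by
  have hpow : (0:ℝ) < 2^k := by positivity
  have hpow' : (0:ℝ) < 2^(k+1) := by positivity
  set f := Int.fract ((2:ℝ)^k * ν) with hfdef
  set p := m ν k / 2^k with hpdef
  set q := (m ν k + 1) / 2^k with hqdef
  set sA := (P a b p) ^ ((1:ℝ)/2) with hsAdef
  set sB := (P a b q) ^ ((1:ℝ)/2) with hsBdef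
  have hA : sA ^ 2 = P a b p := half_sq (P_pos ha hb p)
  have hB : sB ^ 2 = P a b q := half_sq (P_pos ha hb q)
  have hG : sA * sB = P a b ((p + q)/2) := by
    rw [hsAdef, hsBdef, P_combine ha hb p q _ _ (by norm_num)]
    congr 1; ring
  have hmid : (p + q)/2 = (2 * m ν k + 1) / 2^(k+1) := by
    rw [hpdef, hqdef, pow_succ]
    field_simp
    ring
  have hr : r ν k = min f (1 - f) := r_eq h0 h1 k
  rcases lt_or_ge f (1/2) with hc | hc
  · obtain ⟨hm, hf⟩ := succ_lt (ν := ν) (k := k) hc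
    have hrk : r ν k = f := by rw [hr, min_eq_left (by linarith)]
    have e1 : m ν (k+1) / 2^(k+1) = p := by
      rw [hm, hpdef, pow_succ]; field_simp
    have e2 : (m ν (k+1) + 1) / 2^(k+1) = (p + q)/2 := by
      rw [hm, hmid]
    rw [W, W, hf, hrk, e1, e2, ← hG, ← hfdef]
    linear_combination (-f) * hA + (-f) * hB
  · obtain ⟨hm, hf⟩ := succ_ge (ν := ν) (k := k) hc
    have hf1 : f < 1 := Int.fract_lt_one _
    have hrk : r ν k = 1 - f := by rw [hr, min_eq_right (by linarith)]
    have e1 : m ν (k+1) / 2^(k+1) = (p + q)/2 := by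
      rw [hm, hmid]
    have e2 : (m ν (k+1) + 1) / 2^(k+1) = q := by
      rw [hm, hqdef, pow_succ]; field_simp; ring
    rw [W, W, hf, hrk, e1, e2, ← hG, ← hfdef]
    linear_combination (-(1-f)) * hA + (-(1-f)) * hB

lemma W_ge {a b ν : ℝ} (ha : 0 < a) (hb : 0 < b) (h0 : 0 < ν) (h1 : ν < 1) (k : ℕ) :
    P a b ν ≤ W a b ν k := by
  have hpow : (0:ℝ) < 2^k := by positivity
  set f := Int.fract ((2:ℝ)^k * ν) with hfdef
  have hf0 : 0 ≤ f := Int.fract_nonneg _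
  have hf1 : f < 1 := Int.fract_lt_one _
  have key := Real.geom_mean_le_arith_mean2_weighted (w₁ := 1 - f) (w₂ := f)
    (p₁ := P a b (m ν k / 2^k)) (p₂ := P a b ((m ν k + 1) / 2^k))
    (by linarith) hf0 (P_pos ha hb _).le (P_pos ha hb _).le (by ring)
  have hexp : P a b (m ν k / 2^k) ^ (1 - f) * P a b ((m ν k + 1) / 2^k) ^ f = P a b ν := by
    rw [P_combine ha hb _ _ _ _ (by ring : (1 - f) + f = 1)]
    congr 1
    have hme := m_eq ν k
    have h2 : ((2:ℝ)^k) ≠ 0 := hpow.ne'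
    field_simp
    linear_combination hme
  rw [hexp] at key
  exact key

lemma partial_sum {a b ν : ℝ} (ha : 0 < a) (hb : 0 < b) (h0 : 0 < ν) (h1 : ν < 1) (N : ℕ) :
    ∑ k ∈ Finset.range N, r ν k * ((P a b (m ν k / 2^k)) ^ ((1:ℝ)/2)
        - (P a b ((m ν k + 1) / 2^k)) ^ ((1:ℝ)/2)) ^ 2
      = ν * a + (1 - ν) * b - W a b ν N := by
  induction N with
  | zero =>
    have hm0 := m_zero h0 h1
    rw [Finset.sum_range_zero, W, fract_zero h0 h1, hm0]
    have e0 : (0:ℝ) / 2^(0:ℕ) = 0 := by norm_num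
    have e1 : ((0:ℝ) + 1) / 2^(0:ℕ) = 1 := by norm_num
    rw [e0, e1]
    unfold P
    norm_num
    ring
  | succ N ih =>
    rw [Finset.sum_range_succ, ih, step ha hb h0 h1 N]
    ring

lemma r_nonneg {ν : ℝ} (h0 : 0 < ν) (h1 : ν < 1) (k : ℕ) : 0 ≤ r ν k := by
  rw [r_eq h0 h1 k]
  have := Int.fract_nonneg ((2:ℝ)^k * ν)
  have := Int.fract_lt_one ((2:ℝ)^k * ν)
  exact le_min (by linarith) (by linarith)

end Stmt4Aux

open Stmt4Aux in
theorem stmt4 (a b ν : ℝ) (ha : 0 < a) (hb : 0 < b) (hν : ν ∈ Set.Ioo (0 : ℝ) 1) :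
    (1 - ν) * a + ν * b ≤ a ^ (1 - ν) * b ^ ν + (Real.sqrt a - Real.sqrt b) ^ 2 -
      ∑' k : ℕ, r ν k *
        ((a ^ (m ν k / 2 ^ k) * b ^ (1 - m ν k / 2 ^ k)) ^ ((1 : ℝ) / 2) -
          (a ^ ((m ν k + 1) / 2 ^ k) * b ^ (1 - (m ν k + 1) / 2 ^ k)) ^ ((1 : ℝ) / 2)) ^ 2 := by
  obtain ⟨h0, h1⟩ := hν
  have hterm : ∀ k : ℕ, r ν k *
        ((a ^ (m ν k / 2 ^ k) * b ^ (1 - m ν k / 2 ^ k)) ^ ((1 : ℝ) / 2) -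
          (a ^ ((m ν k + 1) / 2 ^ k) * b ^ (1 - (m ν k + 1) / 2 ^ k)) ^ ((1 : ℝ) / 2)) ^ 2
      = r ν k * ((P a b (m ν k / 2^k)) ^ ((1:ℝ)/2)
        - (P a b ((m ν k + 1) / 2^k)) ^ ((1:ℝ)/2)) ^ 2 := fun k => rfl
  have htsum : ∑' k : ℕ, r ν k *
        ((a ^ (m ν k / 2 ^ k) * b ^ (1 - m ν k / 2 ^ k)) ^ ((1 : ℝ) / 2) -
          (a ^ ((m ν k + 1) / 2 ^ k) * b ^ (1 - (m ν k + 1) / 2 ^ k)) ^ ((1 : ℝ) / 2)) ^ 2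
      ≤ ν * a + (1 - ν) * b - P a b ν := by
    apply Real.tsum_le_of_sum_range_le
    · intro k
      exact mul_nonneg (r_nonneg h0 h1 k) (sq_nonneg _)
    · intro N
      simp only [hterm]
      rw [partial_sum ha hb h0 h1 N]
      have := W_ge ha hb h0 h1 N
      linarith
  -- AM-GM : 2 √a √b ≤ a^(1-ν) b^ν + a^ν b^(1-ν)
  have hP1 : P a b (1 - ν) = a ^ (1 - ν) * b ^ ν := by
    unfold P; rw [show (1:ℝ) - (1 - ν) = ν by ring]
  have hgm : (P a b (1 - ν)) ^ ((1:ℝ)/2) * (P a b ν) ^ ((1:ℝ)/2) = Real.sqrt a * Real.sqrt b := by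
    rw [P_combine ha hb _ _ _ _ (by norm_num : (1:ℝ)/2 + 1/2 = 1)]
    rw [show (1 - ν) * ((1:ℝ)/2) + ν * ((1:ℝ)/2) = 1/2 by ring]
    unfold P
    rw [show (1:ℝ) - 1/2 = 1/2 by norm_num, Real.sqrt_eq_rpow, Real.sqrt_eq_rpow]
  have h2 : 2 * (Real.sqrt a * Real.sqrt b) ≤ P a b (1 - ν) + P a b ν := by
    have hu := half_sq (P_pos ha hb (1 - ν))
    have hv := half_sq (P_pos ha hb ν)
    nlinarith [sq_nonneg ((P a b (1 - ν)) ^ ((1:ℝ)/2) - (P a b ν) ^ ((1:ℝ)/2)), hgm]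
  have hsq : (Real.sqrt a - Real.sqrt b) ^ 2 = a + b - 2 * (Real.sqrt a * Real.sqrt b) := by
    have hsa := Real.sq_sqrt ha.le
    have hsb := Real.sq_sqrt hb.le
    nlinarith [hsa, hsb]
  rw [hsq, ← hP1]
  linarith
end

section
/- Let a, b be positive real numbers and ν ∈ (0,1). Then (a+b)/2 ≤ H_ν(a,b) + (√a − √b)² − Σ_{k=0}^{∞} r_k [ H_{m_k/2^k}(a,b) − 2 H_{(2m_k+1)/2^{k+1}}(a,b) + H_{(m_k+1)/2^k}(a,b) ], where the infinite series is interpreted as its sum (the terms are nonnegative). -/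
/-- The Heinz mean `H_μ(a,b) = (a^(1-μ) b^μ + a^μ b^(1-μ))/2`. -/
noncomputable def H (a b μ : ℝ) : ℝ := (a ^ (1 - μ) * b ^ μ + a ^ μ * b ^ (1 - μ)) / 2

namespace Stmt5Aux

open Real

/-- `Fm c d μ = c^(1-μ) d^μ`. -/
noncomputable def Fm (c d μ : ℝ) : ℝ := c ^ (1 - μ) * d ^ μ

/-- fractional part of `2^k ν` -/
noncomputable def fr (ν : ℝ) (k : ℕ) : ℝ := Int.fract (2 ^ k * ν)

lemma fr_nonneg (ν : ℝ) (k : ℕ) : 0 ≤ fr ν k := Int.fract_nonneg _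

lemma fr_lt_one (ν : ℝ) (k : ℕ) : fr ν k < 1 := Int.fract_lt_one _

lemma m_eq (ν : ℝ) (k : ℕ) : m ν k = 2 ^ k * ν - fr ν k := by
  unfold m fr
  have := Int.floor_add_fract ((2:ℝ) ^ k * ν)
  linarith

lemma succ_cases (ν : ℝ) (k : ℕ) :
    (fr ν k < 1/2 ∧ fr ν (k+1) = 2 * fr ν k ∧ m ν (k+1) = 2 * m ν k) ∨
    (1/2 ≤ fr ν k ∧ fr ν (k+1) = 2 * fr ν k - 1 ∧ m ν (k+1) = 2 * m ν k + 1) := by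
  unfold fr m
  have hf0 : (0:ℝ) ≤ Int.fract ((2:ℝ)^k * ν) := Int.fract_nonneg _
  have hf1 : Int.fract ((2:ℝ)^k * ν) < 1 := Int.fract_lt_one _
  have hkey : (2:ℝ)^(k+1) * ν =
      ((2 * ⌊(2:ℝ)^k * ν⌋ : ℤ) : ℝ) + 2 * Int.fract ((2:ℝ)^k * ν) := by
    rw [pow_succ]
    push_cast
    have := Int.floor_add_fract ((2:ℝ)^k * ν)
    linarith
  rcases lt_or_ge (Int.fract ((2:ℝ)^k * ν)) (1/2) with h | h
  · have hfl : ⌊2 * Int.fract ((2:ℝ)^k * ν)⌋ = 0 :=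
      Int.floor_eq_zero_iff.2 ⟨by linarith, by linarith⟩
    have hfr2 : Int.fract (2 * Int.fract ((2:ℝ)^k * ν)) = 2 * Int.fract ((2:ℝ)^k * ν) :=
      Int.fract_eq_self.2 ⟨by linarith, by linarith⟩
    left
    refine ⟨h, ?_, ?_⟩
    · rw [hkey, Int.fract_intCast_add, hfr2]
    · rw [hkey, Int.floor_intCast_add, hfl]
      push_cast
      ring
  · have hfl : ⌊2 * Int.fract ((2:ℝ)^k * ν)⌋ = 1 :=
      Int.floor_eq_iff.2 ⟨by push_cast; linarith, by push_cast; linarith⟩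
    have hfr2 : Int.fract (2 * Int.fract ((2:ℝ)^k * ν)) =
        2 * Int.fract ((2:ℝ)^k * ν) - 1 := by
      have h2 : 2 * Int.fract ((2:ℝ)^k * ν) =
          ((1:ℤ) : ℝ) + (2 * Int.fract ((2:ℝ)^k * ν) - 1) := by push_cast; ring
      calc Int.fract (2 * Int.fract ((2:ℝ)^k * ν))
          = Int.fract (((1:ℤ) : ℝ) + (2 * Int.fract ((2:ℝ)^k * ν) - 1)) := by
            conv_lhs => rw [h2]
        _ = Int.fract (2 * Int.fract ((2:ℝ)^k * ν) - 1) := Int.fract_intCast_add _ _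
        _ = 2 * Int.fract ((2:ℝ)^k * ν) - 1 :=
            Int.fract_eq_self.2 ⟨by linarith, by linarith⟩
    right
    refine ⟨h, ?_, ?_⟩
    · rw [hkey, Int.fract_intCast_add, hfr2]
    · rw [hkey, Int.floor_intCast_add, hfl]
      push_cast
      ring

lemma fr_zero {ν : ℝ} (hν : ν ∈ Set.Ioo (0:ℝ) 1) : fr ν 0 = ν := by
  unfold fr
  rw [pow_zero, one_mul, Int.fract_eq_self.2 ⟨hν.1.le, hν.2⟩]

lemma r_eq {ν : ℝ} (hν : ν ∈ Set.Ioo (0:ℝ) 1) :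
    ∀ k, r ν k = min (fr ν k) (1 - fr ν k)
  | 0 => by rw [fr_zero hν]; rfl
  | (k+1) => by
      have ih := r_eq hν k
      have h0 := fr_nonneg ν k
      have h1 := fr_lt_one ν k
      rcases succ_cases ν k with ⟨hh, h2, _⟩ | ⟨hh, h2, _⟩
      · have hm : min (fr ν k) (1 - fr ν k) = fr ν k := min_eq_left (by linarith)
        show min (2 * r ν k) (1 - 2 * r ν k) = _
        rw [ih, hm, h2]
      · have hm : min (fr ν k) (1 - fr ν k) = 1 - fr ν k := min_eq_right (by linarith)
        show min (2 * r ν k) (1 - 2 * r ν k) = _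
        rw [ih, hm, h2, min_comm]
        congr 1 <;> ring

lemma r_nonneg {ν : ℝ} (hν : ν ∈ Set.Ioo (0:ℝ) 1) (k : ℕ) : 0 ≤ r ν k := by
  rw [r_eq hν k]
  exact le_min (fr_nonneg ν k) (by linarith [fr_lt_one ν k])

lemma Fm_pos {c d : ℝ} (hc : 0 < c) (hd : 0 < d) (μ : ℝ) : 0 < Fm c d μ := by
  unfold Fm
  positivity

lemma Fm_mul {c d : ℝ} (hc : 0 < c) (hd : 0 < d) (μ μ' : ℝ) :
    Fm c d μ * Fm c d μ' = c ^ (2 - μ - μ') * d ^ (μ + μ') := by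
  unfold Fm
  rw [mul_mul_mul_comm, ← Real.rpow_add hc, ← Real.rpow_add hd]
  congr 1
  ring

lemma Fm_comb {c d : ℝ} (hc : 0 < c) (hd : 0 < d) (s μ μ' : ℝ) :
    Fm c d ((1-s)*μ + s*μ') = Fm c d μ ^ (1-s) * Fm c d μ' ^ s := by
  unfold Fm
  rw [Real.mul_rpow (rpow_nonneg hc.le _) (rpow_nonneg hd.le _),
    Real.mul_rpow (rpow_nonneg hc.le _) (rpow_nonneg hd.le _),
    ← Real.rpow_mul hc.le, ← Real.rpow_mul hd.le, ← Real.rpow_mul hc.le,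
    ← Real.rpow_mul hd.le, mul_mul_mul_comm, ← Real.rpow_add hc, ← Real.rpow_add hd]
  congr 1 <;> ring

lemma w_nonneg {c d : ℝ} (hc : 0 < c) (hd : 0 < d) (μ μ' : ℝ) :
    0 ≤ Fm c d μ - 2 * Fm c d ((μ + μ')/2) + Fm c d μ' := by
  have hsq : Fm c d ((μ+μ')/2) * Fm c d ((μ+μ')/2) = Fm c d μ * Fm c d μ' := by
    rw [Fm_mul hc hd, Fm_mul hc hd]
    congr 1 <;> congr 1 <;> ring
  have hp := Fm_pos hc hd μ
  have hq := Fm_pos hc hd μ'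
  have hs := Fm_pos hc hd ((μ+μ')/2)
  nlinarith [sq_nonneg (Fm c d μ - Fm c d μ'), hsq, hs, hp, hq]

/-- The key telescoping estimate for one "half" of the Heinz mean. -/
lemma key {c d ν : ℝ} (hc : 0 < c) (hd : 0 < d) (hν : ν ∈ Set.Ioo (0:ℝ) 1) (N : ℕ) :
    ∑ k ∈ Finset.range N, r ν k *
        (Fm c d (m ν k / 2 ^ k) - 2 * Fm c d ((2 * m ν k + 1) / 2 ^ (k + 1)) +
          Fm c d ((m ν k + 1) / 2 ^ k))
      ≤ (1 - ν) * c + ν * d - Fm c d ν := by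
  set E : ℕ → ℝ := fun k =>
    (1 - fr ν k) * Fm c d (m ν k / 2 ^ k) + fr ν k * Fm c d ((m ν k + 1) / 2 ^ k) with hE
  have h2k : ∀ k : ℕ, ((2:ℝ)) ^ k ≠ 0 := fun k => by positivity
  have hstep : ∀ k, r ν k *
      (Fm c d (m ν k / 2 ^ k) - 2 * Fm c d ((2 * m ν k + 1) / 2 ^ (k + 1)) +
        Fm c d ((m ν k + 1) / 2 ^ k)) = E k - E (k+1) := by
    intro k
    have h0 := fr_nonneg ν k
    have h1 := fr_lt_one ν k
    rcases succ_cases ν k with ⟨hh, h2, h3⟩ | ⟨hh, h2, h3⟩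
    · have hr : r ν k = fr ν k := by
        rw [r_eq hν k]; exact min_eq_left (by linarith)
      have ha1 : m ν (k+1) / 2 ^ (k+1) = m ν k / 2 ^ k := by
        rw [h3, pow_succ]
        field_simp
      have ha2 : (m ν (k+1) + 1) / 2 ^ (k+1) = (2 * m ν k + 1) / 2 ^ (k+1) := by
        rw [h3]
      simp only [hE]
      rw [ha1, ha2, h2, hr]
      ring
    · have hr : r ν k = 1 - fr ν k := by
        rw [r_eq hν k]; exact min_eq_right (by linarith)
      have ha1 : m ν (k+1) / 2 ^ (k+1) = (2 * m ν k + 1) / 2 ^ (k+1) := by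
        rw [h3]
      have ha2 : (m ν (k+1) + 1) / 2 ^ (k+1) = (m ν k + 1) / 2 ^ k := by
        rw [h3, pow_succ]
        field_simp
        ring
      simp only [hE]
      rw [ha1, ha2, h2, hr]
      ring
  rw [Finset.sum_congr rfl (fun k _ => hstep k), Finset.sum_range_sub' E N]
  have hE0 : E 0 = (1 - ν) * c + ν * d := by
    have hm0 : m ν 0 = 0 := by
      unfold m
      rw [pow_zero, one_mul, Int.floor_eq_zero_iff.2 ⟨hν.1.le, hν.2⟩]
      norm_num
    have hF1 : Fm c d (m ν 0 / 2 ^ 0) = c := by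
      rw [hm0]; norm_num [Fm, Real.rpow_zero, Real.rpow_one]
    have hF2 : Fm c d ((m ν 0 + 1) / 2 ^ 0) = d := by
      rw [hm0]; norm_num [Fm, Real.rpow_zero, Real.rpow_one]
    simp only [hE]
    rw [hF1, hF2, fr_zero hν]
  have hEN : Fm c d ν ≤ E N := by
    have harg : (1 - fr ν N) * (m ν N / 2 ^ N) + fr ν N * ((m ν N + 1) / 2 ^ N) = ν := by
      rw [m_eq]
      field_simp
      ring
    have := Fm_comb hc hd (fr ν N) (m ν N / 2 ^ N) ((m ν N + 1) / 2 ^ N)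
    rw [harg] at this
    rw [this]
    simp only [hE]
    exact Real.geom_mean_le_arith_mean2_weighted (by linarith [fr_lt_one ν N])
      (fr_nonneg ν N) (Fm_pos hc hd _).le (Fm_pos hc hd _).le (by ring)
  linarith

end Stmt5Aux

theorem stmt5 (a b ν : ℝ) (ha : 0 < a) (hb : 0 < b) (hν : ν ∈ Set.Ioo (0 : ℝ) 1) :
    (a + b) / 2 ≤ H a b ν + (Real.sqrt a - Real.sqrt b) ^ 2 -
      ∑' k : ℕ, r ν k *
        (H a b (m ν k / 2 ^ k) - 2 * H a b ((2 * m ν k + 1) / 2 ^ (k + 1)) +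
          H a b ((m ν k + 1) / 2 ^ k)) := by
  open Stmt5Aux in
  have hHF : ∀ μ : ℝ, H a b μ = (Fm a b μ + Fm b a μ) / 2 := by
    intro μ; unfold H Stmt5Aux.Fm; ring
  set S : ℕ → ℝ := fun k => r ν k *
      (H a b (m ν k / 2 ^ k) - 2 * H a b ((2 * m ν k + 1) / 2 ^ (k + 1)) +
        H a b ((m ν k + 1) / 2 ^ k)) with hS
  have hSplit : ∀ k : ℕ, S k =
      (r ν k * (Fm a b (m ν k / 2 ^ k) - 2 * Fm a b ((2 * m ν k + 1) / 2 ^ (k + 1)) +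
          Fm a b ((m ν k + 1) / 2 ^ k)) +
       r ν k * (Fm b a (m ν k / 2 ^ k) - 2 * Fm b a ((2 * m ν k + 1) / 2 ^ (k + 1)) +
          Fm b a ((m ν k + 1) / 2 ^ k))) / 2 := by
    intro k
    simp only [hS, hHF]
    ring
  have hmid : ∀ k : ℕ, (2 * m ν k + 1) / 2 ^ (k + 1) =
      ((m ν k / 2 ^ k) + ((m ν k + 1) / 2 ^ k)) / 2 := by
    intro k
    rw [pow_succ]
    field_simp
    ring
  have hSnonneg : ∀ k, 0 ≤ S k := by
    intro k
    rw [hSplit k]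
    have h1 := Stmt5Aux.w_nonneg ha hb (m ν k / 2 ^ k) ((m ν k + 1) / 2 ^ k)
    have h2 := Stmt5Aux.w_nonneg hb ha (m ν k / 2 ^ k) ((m ν k + 1) / 2 ^ k)
    rw [← hmid k] at h1 h2
    have hr := Stmt5Aux.r_nonneg hν k
    positivity
  have hsum : ∀ N : ℕ, ∑ k ∈ Finset.range N, S k ≤ (a + b) / 2 - H a b ν := by
    intro N
    have h1 := Stmt5Aux.key ha hb hν N
    have h2 := Stmt5Aux.key hb ha hν N
    calc ∑ k ∈ Finset.range N, S k
        = (∑ k ∈ Finset.range N, r ν k *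
            (Fm a b (m ν k / 2 ^ k) - 2 * Fm a b ((2 * m ν k + 1) / 2 ^ (k + 1)) +
              Fm a b ((m ν k + 1) / 2 ^ k)) +
           ∑ k ∈ Finset.range N, r ν k *
            (Fm b a (m ν k / 2 ^ k) - 2 * Fm b a ((2 * m ν k + 1) / 2 ^ (k + 1)) +
              Fm b a ((m ν k + 1) / 2 ^ k))) / 2 := by
          rw [← Finset.sum_add_distrib, Finset.sum_div]
          exact Finset.sum_congr rfl fun k _ => hSplit k
      _ ≤ ((1 - ν) * a + ν * b - Fm a b ν + ((1 - ν) * b + ν * a - Fm b a ν)) / 2 := by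
          linarith
      _ = (a + b) / 2 - H a b ν := by rw [hHF]; ring
  have htsum : ∑' k, S k ≤ (a + b) / 2 - H a b ν :=
    Real.tsum_le_of_sum_range_le hSnonneg hsum
  have hGH : Real.sqrt a * Real.sqrt b ≤ H a b ν := by
    have hp := Stmt5Aux.Fm_pos ha hb ν
    have hq := Stmt5Aux.Fm_pos hb ha ν
    have hmul : Fm a b ν * Fm b a ν = a * b := by
      unfold Stmt5Aux.Fm
      rw [show (a^(1-ν)*b^ν)*(b^(1-ν)*a^ν) = (a^(1-ν)*a^ν)*(b^ν*b^(1-ν)) from by ring,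
        ← Real.rpow_add ha, ← Real.rpow_add hb,
        show (1-ν)+ν = (1:ℝ) from by ring, show ν+(1-ν) = (1:ℝ) from by ring,
        Real.rpow_one, Real.rpow_one]
    have hg : (Real.sqrt a * Real.sqrt b) ^ 2 = a * b := by
      rw [mul_pow, Real.sq_sqrt ha.le, Real.sq_sqrt hb.le]
    have hg0 : 0 ≤ Real.sqrt a * Real.sqrt b :=
      mul_nonneg (Real.sqrt_nonneg a) (Real.sqrt_nonneg b)
    rw [hHF]
    nlinarith [sq_nonneg (Fm a b ν - Fm b a ν), hmul, hg, hg0, hp, hq]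
  have hsq : (Real.sqrt a - Real.sqrt b) ^ 2 = a + b - 2 * (Real.sqrt a * Real.sqrt b) := by
    rw [sub_sq, Real.sq_sqrt ha.le, Real.sq_sqrt hb.le]
    ring
  rw [hsq]
  have : ∑' k : ℕ, r ν k *
      (H a b (m ν k / 2 ^ k) - 2 * H a b ((2 * m ν k + 1) / 2 ^ (k + 1)) +
        H a b ((m ν k + 1) / 2 ^ k)) = ∑' k, S k := rfl
  rw [this]
  linarith
end

section
/- Let a, b be positive real numbers and ν ∈ (0,1). Then (1−ν)a² + νb² ≥ (a^{1−ν}b^{ν})² + Σ_{k=0}^{∞} r_k [ a^{1−m_k/2^k} b^{m_k/2^k} − a^{1−(m_k+1)/2^k} b^{(m_k+1)/2^k} ]², where the infinite series is interpreted as its sum (the terms are nonnegative). -/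
section FloorTwoMul

variable {α : Type*} [Field α] [LinearOrder α] [IsStrictOrderedRing α] [FloorRing α] {x : α}

theorem Int.floor_two_mul_of_fract_lt_half (h : Int.fract x < 1 / 2) : ⌊2 * x⌋ = 2 * ⌊x⌋ := by
  rw [Int.floor_eq_iff]
  push_cast
  constructor <;> linarith [Int.floor_add_fract x, Int.fract_nonneg x]

theorem Int.floor_two_mul_of_half_le_fract (h : 1 / 2 ≤ Int.fract x) :
    ⌊2 * x⌋ = 2 * ⌊x⌋ + 1 := by
  rw [Int.floor_eq_iff]
  push_cast
  constructor <;> linarith [Int.floor_add_fract x, Int.fract_lt_one x]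

theorem Int.fract_two_mul_of_fract_lt_half (h : Int.fract x < 1 / 2) :
    Int.fract (2 * x) = 2 * Int.fract x := by
  rw [Int.fract, Int.fract, Int.floor_two_mul_of_fract_lt_half h]
  push_cast
  ring

theorem Int.fract_two_mul_of_half_le_fract (h : 1 / 2 ≤ Int.fract x) :
    Int.fract (2 * x) = 2 * Int.fract x - 1 := by
  rw [Int.fract, Int.fract, Int.floor_two_mul_of_half_le_fract h]
  push_cast
  ring

end FloorTwoMul

section Digits

variable {ν : ℝ} {k : ℕ}

theorem two_pow_succ_mul (k : ℕ) (ν : ℝ) : (2 : ℝ) ^ (k + 1) * ν = 2 * (2 ^ k * ν) := by ring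

theorem m_succ_of_fract_lt_half (h : Int.fract (2 ^ k * ν) < 1 / 2) :
    m ν (k + 1) = 2 * m ν k := by
  simp only [m, two_pow_succ_mul, Int.floor_two_mul_of_fract_lt_half h]
  push_cast
  ring

theorem m_succ_of_half_le_fract (h : 1 / 2 ≤ Int.fract (2 ^ k * ν)) :
    m ν (k + 1) = 2 * m ν k + 1 := by
  simp only [m, two_pow_succ_mul, Int.floor_two_mul_of_half_le_fract h]
  push_cast
  ring

theorem m_zero_s6 (hν : ν ∈ Set.Ico 0 1) : m ν 0 = 0 := by
  simp [m, Int.floor_eq_zero_iff.2 hν]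

theorem r_eq_min_fract (hν : ν ∈ Set.Ico 0 1) (k : ℕ) :
    r ν k = min (Int.fract (2 ^ k * ν)) (1 - Int.fract (2 ^ k * ν)) := by
  induction k with
  | zero => simp [r, Int.fract_eq_self.2 hν]
  | succ k ih =>
    rw [r, ih, two_pow_succ_mul]
    set θ := Int.fract (2 ^ k * ν)
    rcases lt_or_ge θ (1 / 2) with h | h
    · rw [min_eq_left (show θ ≤ 1 - θ by linarith), Int.fract_two_mul_of_fract_lt_half h]
    · rw [min_eq_right (show 1 - θ ≤ θ by linarith), Int.fract_two_mul_of_half_le_fract h,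
        min_comm]
      congr 1 <;> ring

theorem r_nonneg (hν : ν ∈ Set.Ico 0 1) (k : ℕ) : 0 ≤ r ν k := by
  rw [r_eq_min_fract hν]
  exact le_min (Int.fract_nonneg _) (by linarith [Int.fract_lt_one (2 ^ k * ν)])

theorem dyadic_weighted_mean (ν : ℝ) (k : ℕ) :
    (1 - Int.fract (2 ^ k * ν)) * (m ν k / 2 ^ k) +
      Int.fract (2 ^ k * ν) * ((m ν k + 1) / 2 ^ k) = ν := by
  have h := Int.floor_add_fract (2 ^ k * ν)
  rw [← m] at h
  field_simp
  linear_combination h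

end Digits

section GeomInterp

noncomputable def geomInterp (a b t : ℝ) : ℝ := a ^ (1 - t) * b ^ t

theorem geomInterp_zero (a b : ℝ) : geomInterp a b 0 = a := by simp [geomInterp]

theorem geomInterp_one (a b : ℝ) : geomInterp a b 1 = b := by simp [geomInterp]

variable {a b : ℝ}

theorem geomInterp_pos (ha : 0 < a) (hb : 0 < b) (t : ℝ) : 0 < geomInterp a b t := by
  unfold geomInterp; positivity

theorem geomInterp_sq (ha : 0 ≤ a) (hb : 0 ≤ b) (t : ℝ) :
    geomInterp a b t ^ 2 = geomInterp (a ^ 2) (b ^ 2) t := by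
  simp only [geomInterp, mul_pow, ← Real.rpow_natCast, ← Real.rpow_mul ha, ← Real.rpow_mul hb]
  ring_nf

theorem geomInterp_mul (ha : 0 < a) (hb : 0 < b) (s t : ℝ) :
    geomInterp a b s * geomInterp a b t = geomInterp a b ((s + t) / 2) ^ 2 := by
  rw [geomInterp_sq ha.le hb.le]
  unfold geomInterp
  rw [mul_mul_mul_comm, ← Real.rpow_add ha, ← Real.rpow_add hb]
  simp only [← Real.rpow_natCast, ← Real.rpow_mul ha.le, ← Real.rpow_mul hb.le]
  ring_nf

theorem geomInterp_convexComb (ha : 0 < a) (hb : 0 < b) (s t w : ℝ) :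
    geomInterp a b ((1 - w) * s + w * t) = geomInterp a b s ^ (1 - w) * geomInterp a b t ^ w := by
  simp only [geomInterp, Real.mul_rpow (Real.rpow_nonneg ha.le _) (Real.rpow_nonneg hb.le _),
    ← Real.rpow_mul ha.le, ← Real.rpow_mul hb.le, mul_mul_mul_comm, ← Real.rpow_add ha,
    ← Real.rpow_add hb]
  ring_nf

theorem geomInterp_convexComb_le (ha : 0 < a) (hb : 0 < b) (s t : ℝ) {w : ℝ} (hw₀ : 0 ≤ w)
    (hw₁ : w ≤ 1) :
    geomInterp a b ((1 - w) * s + w * t) ≤ (1 - w) * geomInterp a b s + w * geomInterp a b t := by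
  rw [geomInterp_convexComb ha hb]
  exact Real.geom_mean_le_arith_mean2_weighted (by linarith) hw₀ (geomInterp_pos ha hb s).le
    (geomInterp_pos ha hb t).le (by ring)

end GeomInterp

section Potential

variable {a b ν : ℝ}

noncomputable def dyadicPotential (a b ν : ℝ) (k : ℕ) : ℝ :=
  (1 - Int.fract (2 ^ k * ν)) * geomInterp a b (m ν k / 2 ^ k) ^ 2 +
    Int.fract (2 ^ k * ν) * geomInterp a b ((m ν k + 1) / 2 ^ k) ^ 2

theorem dyadicPotential_zero (hν : ν ∈ Set.Ico 0 1) :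
    dyadicPotential a b ν 0 = (1 - ν) * a ^ 2 + ν * b ^ 2 := by
  simp [dyadicPotential, m_zero_s6 hν, Int.fract_eq_self.2 hν, geomInterp_zero, geomInterp_one]

theorem sq_geomInterp_le_dyadicPotential (ha : 0 < a) (hb : 0 < b) (k : ℕ) :
    geomInterp a b ν ^ 2 ≤ dyadicPotential a b ν k := by
  simp only [dyadicPotential, geomInterp_sq ha.le hb.le]
  conv_lhs => rw [← dyadic_weighted_mean ν k]
  exact geomInterp_convexComb_le (by positivity) (by positivity) _ _ (Int.fract_nonneg _)
    (Int.fract_lt_one _).le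

theorem dyadicPotential_sub_succ (ha : 0 < a) (hb : 0 < b) (hν : ν ∈ Set.Ico 0 1) (k : ℕ) :
    dyadicPotential a b ν k - dyadicPotential a b ν (k + 1) =
      r ν k * (geomInterp a b (m ν k / 2 ^ k) - geomInterp a b ((m ν k + 1) / 2 ^ k)) ^ 2 := by
  have hmid := geomInterp_mul ha hb (m ν k / 2 ^ k) ((m ν k + 1) / 2 ^ k)
  have h2k : (2 : ℝ) ^ (k + 1) = 2 * 2 ^ k := by ring
  simp only [dyadicPotential, r_eq_min_fract hν, two_pow_succ_mul]
  set θ := Int.fract (2 ^ k * ν)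
  rcases lt_or_ge θ (1 / 2) with h | h
  · have hlo : m ν (k + 1) / 2 ^ (k + 1) = m ν k / 2 ^ k := by
      rw [m_succ_of_fract_lt_half h, h2k]; field_simp
    have hhi : (m ν (k + 1) + 1) / 2 ^ (k + 1) = (m ν k / 2 ^ k + (m ν k + 1) / 2 ^ k) / 2 := by
      rw [m_succ_of_fract_lt_half h, h2k]; field_simp; ring
    rw [Int.fract_two_mul_of_fract_lt_half h, hlo, hhi, ← hmid, min_eq_left (by linarith)]
    ring
  · have hlo : m ν (k + 1) / 2 ^ (k + 1) = (m ν k / 2 ^ k + (m ν k + 1) / 2 ^ k) / 2 := by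
      rw [m_succ_of_half_le_fract h, h2k]; field_simp; ring
    have hhi : (m ν (k + 1) + 1) / 2 ^ (k + 1) = (m ν k + 1) / 2 ^ k := by
      rw [m_succ_of_half_le_fract h, h2k]; field_simp; ring
    rw [Int.fract_two_mul_of_half_le_fract h, hlo, hhi, ← hmid, min_eq_right (by linarith)]
    ring

end Potential

theorem stmt6 (a b ν : ℝ) (ha : 0 < a) (hb : 0 < b) (hν : ν ∈ Set.Ioo (0 : ℝ) 1) :
    (1 - ν) * a ^ 2 + ν * b ^ 2 ≥ (a ^ (1 - ν) * b ^ ν) ^ 2 +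
      ∑' k : ℕ, r ν k *
        (a ^ (1 - m ν k / 2 ^ k) * b ^ (m ν k / 2 ^ k) -
          a ^ (1 - (m ν k + 1) / 2 ^ k) * b ^ ((m ν k + 1) / 2 ^ k)) ^ 2 := by
  have hν' : ν ∈ Set.Ico 0 1 := Set.Ioo_subset_Ico_self hν
  have hsum : ∑' k : ℕ, r ν k *
      (geomInterp a b (m ν k / 2 ^ k) - geomInterp a b ((m ν k + 1) / 2 ^ k)) ^ 2 ≤
      dyadicPotential a b ν 0 - geomInterp a b ν ^ 2 := by
    refine Real.tsum_le_of_sum_range_le (fun k => mul_nonneg (r_nonneg hν' k) (sq_nonneg _))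
      fun n => ?_
    simp only [← dyadicPotential_sub_succ ha hb hν', Finset.sum_range_sub']
    linarith [sq_geomInterp_le_dyadicPotential (ν := ν) ha hb n]
  rw [dyadicPotential_zero hν'] at hsum
  simp only [geomInterp] at hsum
  linarith
end

section
/- Let a, b be positive real numbers and ν ∈ (0,1). Then ((1−ν)a + νb)² ≥ (a^{1−ν}b^{ν})² + r_0²(a−b)² + Σ_{k=1}^{∞} r_k [ a^{1−m_k/2^k} b^{m_k/2^k} − a^{1−(m_k+1)/2^k} b^{(m_k+1)/2^k} ]², where the infinite series is interpreted as its sum (the terms are nonnegative). -/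
namespace Stmt8Aux

/-- the fractional part of `2^k ν`. -/
noncomputable def t (ν : ℝ) (k : ℕ) : ℝ := Int.fract (2 ^ k * ν)

lemma t_nonneg (ν : ℝ) (k : ℕ) : 0 ≤ t ν k := Int.fract_nonneg _

lemma t_lt_one (ν : ℝ) (k : ℕ) : t ν k < 1 := Int.fract_lt_one _

lemma m_eq (ν : ℝ) (k : ℕ) : m ν k = 2 ^ k * ν - t ν k := by
  rw [t, m, Int.self_sub_fract]

lemma t_succ (ν : ℝ) (k : ℕ) : t ν (k + 1) = Int.fract (2 * t ν k) := by
  have h : (2 : ℝ) ^ (k + 1) * ν = (↑(2 * ⌊(2:ℝ) ^ k * ν⌋) : ℝ) + 2 * t ν k := by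
    push_cast [t, Int.fract]
    ring
  rw [t, h, Int.fract_intCast_add]

lemma t_succ_lt (ν : ℝ) (k : ℕ) (h : t ν k < 1 / 2) : t ν (k + 1) = 2 * t ν k := by
  rw [t_succ]
  exact Int.fract_eq_self.2 ⟨by linarith [t_nonneg ν k], by linarith⟩

lemma t_succ_ge (ν : ℝ) (k : ℕ) (h : 1 / 2 ≤ t ν k) : t ν (k + 1) = 2 * t ν k - 1 := by
  rw [t_succ]
  have h1 : Int.fract (2 * t ν k) = Int.fract (2 * t ν k - 1) := by
    rw [show 2 * t ν k - 1 = 2 * t ν k + ((-1 : ℤ) : ℝ) by push_cast; ring, Int.fract_add_intCast]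
  rw [h1]
  exact Int.fract_eq_self.2 ⟨by linarith, by linarith [t_lt_one ν k]⟩

lemma m_succ_lt (ν : ℝ) (k : ℕ) (h : t ν k < 1 / 2) : m ν (k + 1) = 2 * m ν k := by
  rw [m_eq, m_eq, t_succ_lt ν k h]
  ring

lemma m_succ_ge (ν : ℝ) (k : ℕ) (h : 1 / 2 ≤ t ν k) : m ν (k + 1) = 2 * m ν k + 1 := by
  rw [m_eq, m_eq, t_succ_ge ν k h]
  ring

lemma r_eq (ν : ℝ) (hν : ν ∈ Set.Ioo (0 : ℝ) 1) (k : ℕ) :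
    r ν k = min (t ν k) (1 - t ν k) := by
  induction k with
  | zero =>
    have ht0 : t ν 0 = ν := by
      rw [t, pow_zero, one_mul]
      exact Int.fract_eq_self.2 ⟨hν.1.le, hν.2⟩
    rw [ht0]; rfl
  | succ k ih =>
    rcases lt_or_ge (t ν k) (1 / 2) with h | h
    · have hmin : min (t ν k) (1 - t ν k) = t ν k := min_eq_left (by linarith)
      rw [r, ih, hmin, t_succ_lt ν k h]
    · have hmin : min (t ν k) (1 - t ν k) = 1 - t ν k := min_eq_right (by linarith)
      rw [r, ih, hmin, t_succ_ge ν k h]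
      rw [show 1 - 2 * (1 - t ν k) = 2 * t ν k - 1 by ring]
      rw [show (2 : ℝ) * (1 - t ν k) = 1 - (2 * t ν k - 1) by ring]
      exact min_comm _ _

lemma r_nonneg (ν : ℝ) (hν : ν ∈ Set.Ioo (0 : ℝ) 1) (k : ℕ) : 0 ≤ r ν k := by
  rw [r_eq ν hν k]
  exact le_min (t_nonneg ν k) (by linarith [t_lt_one ν k])

/-- dyadic exponents -/
noncomputable def c (ν : ℝ) (k : ℕ) : ℝ := m ν k / 2 ^ k

noncomputable def d (ν : ℝ) (k : ℕ) : ℝ := (m ν k + 1) / 2 ^ k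

lemma u_eq (a b : ℝ) (ha : 0 < a) (hb : 0 < b) (p : ℝ) :
    a ^ (1 - p) * b ^ p = a * (b / a) ^ p := by
  rw [Real.div_rpow hb.le ha.le, Real.rpow_sub ha, Real.rpow_one]
  have h : (0:ℝ) < a ^ p := Real.rpow_pos_of_pos ha p
  field_simp
  try ring

/-- the diminishing quantity -/
noncomputable def S (a b ν : ℝ) (k : ℕ) : ℝ :=
  (1 - t ν k) * (a * (b / a) ^ c ν k) ^ 2 + t ν k * (a * (b / a) ^ d ν k) ^ 2

lemma S_step (a b ν : ℝ) (ha : 0 < a) (hb : 0 < b) (hν : ν ∈ Set.Ioo (0 : ℝ) 1) (k : ℕ) :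
    S a b ν (k + 1) =
      S a b ν k - r ν k * (a * (b / a) ^ c ν k - a * (b / a) ^ d ν k) ^ 2 := by
  have hw : (0 : ℝ) < b / a := div_pos hb ha
  have h2k : (2 : ℝ) ^ k ≠ 0 := by positivity
  have h2k1 : (2 : ℝ) ^ (k + 1) ≠ 0 := by positivity
  have hmid : ((b / a) ^ ((c ν k + d ν k) / 2)) ^ 2 = (b / a) ^ c ν k * (b / a) ^ d ν k := by
    rw [sq, ← Real.rpow_add hw, ← Real.rpow_add hw]
    congr 1
    ring
  have hXY : (a * (b / a) ^ ((c ν k + d ν k) / 2)) ^ 2 =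
      (a * (b / a) ^ c ν k) * (a * (b / a) ^ d ν k) := by
    rw [mul_pow, hmid]; ring
  rcases lt_or_ge (t ν k) (1 / 2) with h | h
  · have hc : c ν (k + 1) = c ν k := by
      rw [c, c, m_succ_lt ν k h, pow_succ]
      field_simp
      try ring
    have hd : d ν (k + 1) = (c ν k + d ν k) / 2 := by
      rw [d, c, d, m_succ_lt ν k h, pow_succ]
      field_simp
      try ring
    have hr : r ν k = t ν k := by
      rw [r_eq ν hν k]; exact min_eq_left (by linarith)
    rw [S, S, hc, hd, hr, t_succ_lt ν k h, hXY]
    ring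
  · have hc : c ν (k + 1) = (c ν k + d ν k) / 2 := by
      rw [c, c, d, m_succ_ge ν k h, pow_succ]
      field_simp
      try ring
    have hd : d ν (k + 1) = d ν k := by
      rw [d, d, m_succ_ge ν k h, pow_succ]
      field_simp
      try ring
    have hr : r ν k = 1 - t ν k := by
      rw [r_eq ν hν k]; exact min_eq_right (by linarith)
    rw [S, S, hc, hd, hr, t_succ_ge ν k h, hXY]
    ring

lemma S_tele (a b ν : ℝ) (ha : 0 < a) (hb : 0 < b) (hν : ν ∈ Set.Ioo (0 : ℝ) 1) (n : ℕ) :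
    S a b ν n = S a b ν 0 -
      ∑ k ∈ Finset.range n, r ν k * (a * (b / a) ^ c ν k - a * (b / a) ^ d ν k) ^ 2 := by
  induction n with
  | zero => simp
  | succ n ih =>
    rw [Finset.sum_range_succ, S_step a b ν ha hb hν n, ih]
    ring

lemma S_ge (a b ν : ℝ) (ha : 0 < a) (hb : 0 < b) (hν : ν ∈ Set.Ioo (0 : ℝ) 1) (k : ℕ) :
    (a * (b / a) ^ ν) ^ 2 ≤ S a b ν k := by
  have hw : (0 : ℝ) < b / a := div_pos hb ha
  have hX : (0 : ℝ) < a * (b / a) ^ c ν k := by positivity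
  have hY : (0 : ℝ) < a * (b / a) ^ d ν k := by positivity
  have ht0 := t_nonneg ν k
  have ht1 := t_lt_one ν k
  have hgm := Real.geom_mean_le_arith_mean2_weighted
    (by linarith : (0:ℝ) ≤ 1 - t ν k) ht0 (sq_nonneg (a * (b / a) ^ c ν k))
    (sq_nonneg (a * (b / a) ^ d ν k)) (by ring)
  refine le_trans (le_of_eq ?_) hgm
  -- (a * w^ν)^2 = ((a*w^c)^2)^(1-t) * ((a*w^d)^2)^t
  have hsq : ∀ p : ℝ, ((a * (b / a) ^ p) ^ 2 : ℝ) = a ^ (2:ℝ) * (b / a) ^ (2 * p) := by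
    intro p
    rw [mul_pow, ← Real.rpow_natCast ((b/a) ^ p) 2, ← Real.rpow_natCast a 2,
      ← Real.rpow_mul hw.le]
    norm_num
    left
    ring
  rw [hsq, hsq, hsq]
  rw [Real.mul_rpow (by positivity) (by positivity), Real.mul_rpow (by positivity) (by positivity)]
  rw [← Real.rpow_mul ha.le, ← Real.rpow_mul ha.le,
    ← Real.rpow_mul hw.le, ← Real.rpow_mul hw.le]
  rw [mul_mul_mul_comm, ← Real.rpow_add ha, ← Real.rpow_add hw]
  have he1 : (2:ℝ) * (1 - t ν k) + 2 * t ν k = 2 := by ring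
  have he2 : 2 * c ν k * (1 - t ν k) + 2 * d ν k * t ν k = 2 * ν := by
    have hm := m_eq ν k
    have h2k : (2 : ℝ) ^ k ≠ 0 := by positivity
    rw [c, d]
    field_simp
    nlinarith [hm]
  rw [he1, he2]

lemma floor_zero (ν : ℝ) (hν : ν ∈ Set.Ioo (0 : ℝ) 1) : ⌊(2:ℝ) ^ (0:ℕ) * ν⌋ = 0 := by
  rw [pow_zero, one_mul]
  exact Int.floor_eq_zero_iff.2 ⟨hν.1.le, hν.2⟩

lemma c_zero (ν : ℝ) (hν : ν ∈ Set.Ioo (0 : ℝ) 1) : c ν 0 = 0 := by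
  rw [c, m, floor_zero ν hν]
  norm_num

lemma d_zero (ν : ℝ) (hν : ν ∈ Set.Ioo (0 : ℝ) 1) : d ν 0 = 1 := by
  rw [d, m, floor_zero ν hν]
  norm_num

lemma t_zero (ν : ℝ) (hν : ν ∈ Set.Ioo (0 : ℝ) 1) : t ν 0 = ν := by
  rw [t, pow_zero, one_mul]
  exact Int.fract_eq_self.2 ⟨hν.1.le, hν.2⟩

end Stmt8Aux

open Stmt8Aux in
theorem stmt8 (a b ν : ℝ) (ha : 0 < a) (hb : 0 < b) (hν : ν ∈ Set.Ioo (0 : ℝ) 1) :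
    ((1 - ν) * a + ν * b) ^ 2 ≥ (a ^ (1 - ν) * b ^ ν) ^ 2 + (r ν 0) ^ 2 * (a - b) ^ 2 +
      ∑' k : ℕ, r ν (k + 1) *
        (a ^ (1 - m ν (k + 1) / 2 ^ (k + 1)) * b ^ (m ν (k + 1) / 2 ^ (k + 1)) -
          a ^ (1 - (m ν (k + 1) + 1) / 2 ^ (k + 1)) * b ^ ((m ν (k + 1) + 1) / 2 ^ (k + 1))) ^ 2 := by
  have hw : (0 : ℝ) < b / a := div_pos hb ha
  set g : ℕ → ℝ := fun k => r ν k * (a * (b / a) ^ c ν k - a * (b / a) ^ d ν k) ^ 2 with hg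
  set f : ℕ → ℝ := fun k => g (k + 1) with hf
  have hG : (a ^ (1 - ν) * b ^ ν) ^ 2 = (a * (b / a) ^ ν) ^ 2 := by
    rw [u_eq a b ha hb ν]
  -- the series terms in the statement are exactly f
  have hterm : ∀ k : ℕ,
      r ν (k + 1) *
        (a ^ (1 - m ν (k + 1) / 2 ^ (k + 1)) * b ^ (m ν (k + 1) / 2 ^ (k + 1)) -
          a ^ (1 - (m ν (k + 1) + 1) / 2 ^ (k + 1)) * b ^ ((m ν (k + 1) + 1) / 2 ^ (k + 1))) ^ 2
        = f k := by
    intro k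
    simp only [hf, hg]
    rw [u_eq a b ha hb, u_eq a b ha hb]
    rfl
  rw [tsum_congr hterm]
  have hg_nonneg : ∀ k, 0 ≤ g k := fun k =>
    mul_nonneg (r_nonneg ν hν k) (sq_nonneg _)
  have hf_nonneg : ∀ k, 0 ≤ f k := fun k => hg_nonneg (k + 1)
  have hS0 : S a b ν 0 = (1 - ν) * a ^ 2 + ν * b ^ 2 := by
    rw [S, c_zero ν hν, d_zero ν hν, t_zero ν hν, Real.rpow_zero, Real.rpow_one]
    have : a * (b / a) = b := by field_simp
    rw [this, mul_one]
  have hg0 : g 0 = r ν 0 * (a - b) ^ 2 := by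
    simp only [hg]
    rw [c_zero ν hν, d_zero ν hν, Real.rpow_zero, Real.rpow_one]
    have : a * (b / a) = b := by field_simp
    rw [this, mul_one]
  -- partial-sum bound
  have hsum : ∀ n : ℕ, ∑ i ∈ Finset.range n, f i ≤ S a b ν 0 - (a * (b / a) ^ ν) ^ 2 - g 0 := by
    intro n
    have h1 : ∑ i ∈ Finset.range (n + 1), g i = ∑ i ∈ Finset.range n, f i + g 0 :=
      Finset.sum_range_succ' g n
    have h2 := S_tele a b ν ha hb hν (n + 1)
    have h3 := S_ge a b ν ha hb hν (n + 1)
    have : ∑ i ∈ Finset.range (n + 1), g i ≤ S a b ν 0 - (a * (b / a) ^ ν) ^ 2 := by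
      rw [hg]; linarith [h2, h3]
    linarith [this, h1.symm.le]
  have hsummable : Summable f :=
    summable_of_sum_range_le hf_nonneg hsum
  have htsum : ∑' k, f k ≤ S a b ν 0 - (a * (b / a) ^ ν) ^ 2 - g 0 :=
    Summable.tsum_le_of_sum_range_le hsummable hsum
  -- r 0 arithmetic: r ν 0 - (r ν 0)^2 = ν * (1 - ν)
  have hr0 : r ν 0 - (r ν 0) ^ 2 = ν * (1 - ν) := by
    rcases le_total ν (1 - ν) with h | h
    · rw [show r ν 0 = min ν (1 - ν) from rfl, min_eq_left h]; ring
    · rw [show r ν 0 = min ν (1 - ν) from rfl, min_eq_right h]; ring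
  have hlhs : ((1 - ν) * a + ν * b) ^ 2 = S a b ν 0 - ν * (1 - ν) * (a - b) ^ 2 := by
    rw [hS0]; ring
  rw [ge_iff_le, hG, hlhs, hg0] at *
  nlinarith [htsum, hr0]
end

section
/- Let a, b be positive real numbers and ν ∈ (0,1). Then the series Σ_{k=0}^{∞} r_k [ (a^{1−m_k/2^k} b^{m_k/2^k})^{1/2} − (a^{1−(m_k+1)/2^k} b^{(m_k+1)/2^k})^{1/2} ]² is summable (its terms are nonnegative and its partial sums are bounded above by (1−ν)a + νb − a^{1−ν}b^{ν}). -/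
/-!
The function `g t = (a ^ (1 - t) * b ^ t) ^ (1 / 2)` is smooth, hence Lipschitz on `[0, 1]`.
The `k`-th term is `r_k (g (m_k / 2^k) - g ((m_k + 1) / 2^k))^2` with both points in `[0, 1]`
at distance `2^{-k}`, and `0 ≤ r_k ≤ 1/2`, so it is dominated by a multiple of `4^{-k}`.
-/

open Set NNReal

lemma r_mem_Icc {ν : ℝ} (hν : ν ∈ Icc (0 : ℝ) 1) (k : ℕ) : r ν k ∈ Icc (0 : ℝ) (1 / 2) := by
  induction k with
  | zero =>
    obtain ⟨h0, h1⟩ := hν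
    refine ⟨le_min h0 (by linarith), ?_⟩
    rcases le_total ν (1 / 2) with h | h
    · exact (min_le_left _ _).trans h
    · exact (min_le_right _ _).trans (by linarith)
  | succ k ih =>
    obtain ⟨h0, h1⟩ := ih
    refine ⟨le_min (by linarith) (by linarith), ?_⟩
    rcases le_total (r ν k) (1 / 4) with h | h
    · exact (min_le_left _ _).trans (by linarith)
    · exact (min_le_right _ _).trans (by linarith)

lemma m_nonneg {ν : ℝ} (hν : 0 ≤ ν) (k : ℕ) : 0 ≤ m ν k := by
  unfold m
  exact_mod_cast Int.floor_nonneg.mpr (by positivity)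

lemma m_add_one_le {ν : ℝ} (hν : ν < 1) (k : ℕ) : m ν k + 1 ≤ 2 ^ k := by
  have hlt : ⌊(2 : ℝ) ^ k * ν⌋ < (2 : ℤ) ^ k := by
    rw [Int.floor_lt]
    push_cast
    nlinarith [pow_pos (two_pos : (0 : ℝ) < 2) k]
  unfold m
  exact_mod_cast Int.add_one_le_iff.mpr hlt

lemma exists_lipschitzOnWith_sqrt_weightedGeomMean {a b : ℝ} (ha : 0 < a) (hb : 0 < b) :
    ∃ K, LipschitzOnWith K (fun t : ℝ => (a ^ (1 - t) * b ^ t) ^ ((1 : ℝ) / 2)) (Icc 0 1) := by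
  have hsmooth : ContDiff ℝ 1 (fun t : ℝ => (a ^ (1 - t) * b ^ t) ^ ((1 : ℝ) / 2)) := by
    refine ContDiff.rpow_const_of_ne ?_ fun t => by positivity
    exact (contDiff_const.rpow (contDiff_const.sub contDiff_id) fun _ => ha.ne').mul
      (contDiff_const.rpow contDiff_id fun _ => hb.ne')
  exact hsmooth.locallyLipschitz.locallyLipschitzOn.exists_lipschitzOnWith_of_compact isCompact_Icc

lemma summable_mul_sq_sub_of_lipschitzOnWith {α : Type*} [PseudoMetricSpace α] {f : α → ℝ}
    {s : Set α} {K : ℝ≥0} (hf : LipschitzOnWith K f s) {ρ : ℝ} (hρ₀ : 0 ≤ ρ) (hρ₁ : ρ < 1)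
    {c : ℕ → ℝ} {x y : ℕ → α} (hc : ∀ k, c k ∈ Icc (0 : ℝ) 1) (hx : ∀ k, x k ∈ s)
    (hy : ∀ k, y k ∈ s) (hxy : ∀ k, dist (x k) (y k) ≤ ρ ^ k) :
    Summable fun k => c k * (f (x k) - f (y k)) ^ 2 := by
  have hgeom : Summable fun k : ℕ => (K : ℝ) ^ 2 * (ρ ^ 2) ^ k :=
    (summable_geometric_of_lt_one (sq_nonneg ρ) (by nlinarith)).mul_left _
  refine hgeom.of_nonneg_of_le (fun k => mul_nonneg (hc k).1 (sq_nonneg _)) fun k => ?_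
  have hdiff : |f (x k) - f (y k)| ≤ K * ρ ^ k :=
    calc |f (x k) - f (y k)| = dist (f (x k)) (f (y k)) := (Real.dist_eq _ _).symm
      _ ≤ K * dist (x k) (y k) := hf.dist_le_mul _ (hx k) _ (hy k)
      _ ≤ K * ρ ^ k := mul_le_mul_of_nonneg_left (hxy k) K.coe_nonneg
  calc c k * (f (x k) - f (y k)) ^ 2 ≤ 1 * (K * ρ ^ k) ^ 2 := by
        refine mul_le_mul (hc k).2 ?_ (sq_nonneg _) zero_le_one
        rw [← sq_abs]
        exact pow_le_pow_left₀ (abs_nonneg _) hdiff 2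
    _ = (K : ℝ) ^ 2 * (ρ ^ 2) ^ k := by ring

theorem stmt18 (a b ν : ℝ) (ha : 0 < a) (hb : 0 < b) (hν : ν ∈ Set.Ioo (0 : ℝ) 1) :
    Summable (fun k : ℕ => r ν k *
      ((a ^ (1 - m ν k / 2 ^ k) * b ^ (m ν k / 2 ^ k)) ^ ((1 : ℝ) / 2) -
        (a ^ (1 - (m ν k + 1) / 2 ^ k) * b ^ ((m ν k + 1) / 2 ^ k)) ^ ((1 : ℝ) / 2)) ^ 2) := by
  obtain ⟨K, hK⟩ := exists_lipschitzOnWith_sqrt_weightedGeomMean ha hb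
  have hm₀ := m_nonneg hν.1.le
  have hm₁ := m_add_one_le hν.2
  have h2k (k : ℕ) : (0 : ℝ) < 2 ^ k := by positivity
  refine summable_mul_sq_sub_of_lipschitzOnWith hK (ρ := 1 / 2) (by norm_num) (by norm_num)
    (fun k => Icc_subset_Icc_right (by norm_num) (r_mem_Icc (Ioo_subset_Icc_self hν) k))
    (fun k => ⟨div_nonneg (hm₀ k) (h2k k).le, (div_le_one (h2k k)).2 (by linarith [hm₁ k])⟩)
    (fun k => ⟨div_nonneg (by linarith [hm₀ k]) (h2k k).le, (div_le_one (h2k k)).2 (hm₁ k)⟩)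
    fun k => le_of_eq ?_
  rw [Real.dist_eq, div_sub_div_same, sub_add_cancel_left, abs_div, abs_neg, abs_one,
    abs_of_pos (h2k k), one_div_pow]
end
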